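/- arXiv:2402.02702 — 6 statements merged into one kernel-verified Lean document; each statement's English description precedes it below -/
import Mathlib

section
/- Identification of the treated counterfactual mean in the target population (Theorem 1, Scenario 1): under conditions (A1)–(A6), E[Y¹ | S = 0] = E[ (μ₁₁(X)/μ₁₀(X)) · Y | S = 0 ]. -/
/-!
Since `Y = Y⁰` on `{S = 0}` by (A1) and (A6), and `μ₁₁/μ₁₀ = ρ₁/ρ₀` there by (A4), the claim is
`E[Y¹; S = 0] = E[(ρ₁/ρ₀)(X)·Y⁰; S = 0]`. Tested against the bounded weight `ρ₁/ρ₀` cut off where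
`|ρ₁/ρ₀| ≤ n`, the version property of `ρ₀` turns `Y⁰·(ρ₁/ρ₀)(X)` into `ρ₁(X)`, and that of `ρ₁`
turns `ρ₁(X)` into `Y¹`; letting `n → ∞` removes the cutoff.
-/

open MeasureTheory

/-- `m` is a version of the conditional expectation `E[Z ∣ X; B]`:
`E[Z·h(X)·1_B] = E[m(X)·h(X)·1_B]` for every bounded measurable `h : E → ℝ`. -/
def IsVersion {Ω E : Type*} [MeasurableSpace Ω] [MeasurableSpace E]
    (P : Measure Ω) (X : Ω → E) (Z : Ω → ℝ) (B : Set Ω) (m : E → ℝ) : Prop :=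
  Measurable m ∧
    ∀ h : E → ℝ, Measurable h → (∃ C, ∀ x, |h x| ≤ C) →
      ∫ ω in B, Z ω * h (X ω) ∂P = ∫ ω in B, m (X ω) * h (X ω) ∂P

/-- Conditional mean `E[Z ∣ B]` of a real random variable given an event `B`. -/
noncomputable def condMean {Ω : Type*} [MeasurableSpace Ω]
    (P : Measure Ω) (Z : Ω → ℝ) (B : Set Ω) : ℝ :=
  (∫ ω in B, Z ω ∂P) / (P B).toReal

open Filter Topology

section

variable {Ω E : Type*} [MeasurableSpace Ω] [MeasurableSpace E] {P : Measure Ω} {X : Ω → E}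
  {B : Set Ω}

theorem IsVersion.setIntegral_preimage_mul {Z : Ω → ℝ} {m : E → ℝ} (hv : IsVersion P X Z B m)
    (hX : Measurable X) {C : Set E} (hC : MeasurableSet C) {w : E → ℝ} (hw : Measurable w)
    {K : ℝ} (hK : ∀ x ∈ C, |w x| ≤ K) :
    ∫ ω in X ⁻¹' C, Z ω * w (X ω) ∂P.restrict B
      = ∫ ω in X ⁻¹' C, m (X ω) * w (X ω) ∂P.restrict B := by
  have hbdd : ∃ K', ∀ x, |C.indicator w x| ≤ K' := by
    refine ⟨max K 0, fun x => ?_⟩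
    by_cases hx : x ∈ C
    · rw [Set.indicator_of_mem hx]
      exact le_max_of_le_left (hK x hx)
    · simp [hx]
  have hpreimage (f : Ω → ℝ) : ∫ ω in B, f ω * C.indicator w (X ω) ∂P
      = ∫ ω in X ⁻¹' C, f ω * w (X ω) ∂P.restrict B := by
    rw [← integral_indicator (hX hC)]
    congr 1 with ω
    by_cases hω : X ω ∈ C <;> simp [hω]
  rw [← hpreimage, ← hpreimage]
  exact hv.2 _ (hw.indicator hC) hbdd

theorem setIntegral_eq_ratio_mul_of_isVersion (hX : Measurable X) {Y₀ Y₁ : Ω → ℝ}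
    {ρ₀ ρ₁ : E → ℝ} (h₀ : IsVersion P X Y₀ B ρ₀) (h₁ : IsVersion P X Y₁ B ρ₁)
    (hne : ∀ᵐ ω ∂P.restrict B, ρ₀ (X ω) ≠ 0) (hY₁ : Integrable Y₁ (P.restrict B))
    (hint : Integrable (fun ω => ρ₁ (X ω) / ρ₀ (X ω) * Y₀ ω) (P.restrict B)) :
    ∫ ω in B, Y₁ ω ∂P = ∫ ω in B, ρ₁ (X ω) / ρ₀ (X ω) * Y₀ ω ∂P := by
  set w : E → ℝ := fun x => ρ₁ x / ρ₀ x
  have hw : Measurable w := h₁.1.div h₀.1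
  set T : ℕ → Set Ω := fun n => X ⁻¹' {x | |w x| ≤ n}
  have hT (n : ℕ) : MeasurableSet (T n) := hX (measurableSet_le hw.abs measurable_const)
  have hT_mono : Monotone T := fun _ _ hmn _ hω =>
    show |w _| ≤ _ from le_trans hω (Nat.cast_le.2 hmn)
  have hT_cover : ⋃ n, T n = Set.univ :=
    Set.eq_univ_of_forall fun ω => Set.mem_iUnion.2 (exists_nat_ge |w (X ω)|)
  have htrunc (n : ℕ) : ∫ ω in T n, Y₁ ω ∂P.restrict B
      = ∫ ω in T n, w (X ω) * Y₀ ω ∂P.restrict B :=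
    calc ∫ ω in T n, Y₁ ω ∂P.restrict B = ∫ ω in T n, Y₁ ω * 1 ∂P.restrict B := by simp_rw [mul_one]
      _ = ∫ ω in T n, ρ₁ (X ω) * 1 ∂P.restrict B :=
        h₁.setIntegral_preimage_mul hX (measurableSet_le hw.abs measurable_const)
          measurable_const (K := 1) fun _ _ => by simp
      _ = ∫ ω in T n, ρ₀ (X ω) * w (X ω) ∂P.restrict B := by
        refine integral_congr_ae ?_
        filter_upwards [ae_restrict_of_ae hne] with ω hω
        rw [mul_one, mul_div_cancel₀ _ hω]
      _ = ∫ ω in T n, Y₀ ω * w (X ω) ∂P.restrict B :=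
        (h₀.setIntegral_preimage_mul hX (measurableSet_le hw.abs measurable_const) hw
          fun _ hx => hx).symm
      _ = ∫ ω in T n, w (X ω) * Y₀ ω ∂P.restrict B := by simp_rw [mul_comm]
  have hlim {f : Ω → ℝ} (hf : Integrable f (P.restrict B)) :
      Tendsto (fun n => ∫ ω in T n, f ω ∂P.restrict B) atTop (𝓝 (∫ ω in B, f ω ∂P)) := by
    have := tendsto_setIntegral_of_monotone hT hT_mono hf.integrableOn
    rwa [hT_cover, Measure.restrict_univ] at this
  exact tendsto_nhds_unique ((hlim hY₁).congr htrunc) (hlim hint)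

end

theorem treated_mean_identification_scenario1_general
    {Ω E : Type*} [MeasurableSpace Ω] [MeasurableSpace E]
    (P : Measure Ω)
    (X : Ω → E) (S A Y Y0 Y1 : Ω → ℝ)
    (hX : Measurable X) (hS : Measurable S)
    (hY1int : Integrable Y1 P)
    (μ11 μ10 ρ0 ρ1 : E → ℝ)
    -- (A1) consistency
    (hA1 : ∀ᵐ ω ∂P, Y ω = A ω * Y1 ω + (1 - A ω) * Y0 ω)
    -- (A4) conditional transportability of relative effect measures
    (hρ0 : IsVersion P X Y0 {ω | S ω = 0} ρ0)
    (hρ1 : IsVersion P X Y1 {ω | S ω = 0} ρ1)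
    (hA4 : ∀ᵐ ω ∂P, S ω = 0 →
      μ10 (X ω) ≠ 0 ∧ ρ0 (X ω) ≠ 0 ∧
        μ11 (X ω) / μ10 (X ω) = ρ1 (X ω) / ρ0 (X ω))
    -- (A6) uniform use of the control treatment in the target population
    (hA6 : ∀ᵐ ω ∂P, S ω = 0 → A ω = 0)
    -- integrability of the expression inside the identifying expectation
    (hint : Integrable (fun ω => μ11 (X ω) / μ10 (X ω) * Y ω) P) :
    condMean P Y1 {ω | S ω = 0}
      = condMean P (fun ω => μ11 (X ω) / μ10 (X ω) * Y ω) {ω | S ω = 0} := by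
  have hB : MeasurableSet {ω | S ω = 0} := hS (measurableSet_singleton 0)
  have hρ0_ne : ∀ᵐ ω ∂P.restrict {ω | S ω = 0}, ρ0 (X ω) ≠ 0 := by
    rw [ae_restrict_iff' hB]
    filter_upwards [hA4] with ω hω hS0 using (hω hS0).2.1
  have hweight : ∀ᵐ ω ∂P.restrict {ω | S ω = 0},
      μ11 (X ω) / μ10 (X ω) * Y ω = ρ1 (X ω) / ρ0 (X ω) * Y0 ω := by
    rw [ae_restrict_iff' hB]
    filter_upwards [hA1, hA4, hA6] with ω hY hratio hcontrol hS0
    rw [(hratio hS0).2.2, hY, hcontrol hS0]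
    ring
  unfold condMean
  rw [integral_congr_ae hweight, setIntegral_eq_ratio_mul_of_isVersion hX hρ0 hρ1 hρ0_ne
    hY1int.restrict (hint.restrict.congr hweight)]

/-- Theorem 1 (Scenario 1): identification of the treated counterfactual mean in the
target population under (A1)–(A6):
`E[Y¹ ∣ S = 0] = E[(μ₁₁(X)/μ₁₀(X))·Y ∣ S = 0]`. -/
theorem treated_mean_identification_scenario1
    {Ω E : Type*} [MeasurableSpace Ω] [MeasurableSpace E]
    (P : Measure Ω) [IsProbabilityMeasure P]
    (X : Ω → E) (S A Y Y0 Y1 : Ω → ℝ)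
    (hX : Measurable X) (hS : Measurable S) (hA : Measurable A) (hY : Measurable Y)
    (hS01 : ∀ ω, S ω = 0 ∨ S ω = 1) (hA01 : ∀ ω, A ω = 0 ∨ A ω = 1)
    (hPS0 : 0 < P {ω | S ω = 0})
    (hPS1A1 : 0 < P {ω | S ω = 1 ∧ A ω = 1})
    (hPS1A0 : 0 < P {ω | S ω = 1 ∧ A ω = 0})
    (hYint : Integrable Y P) (hY0int : Integrable Y0 P) (hY1int : Integrable Y1 P)
    -- the fixed versions `g` (of `E[1{S=1} ∣ X]`, note `1{S=1} = S`) and `q` (of `E[A ∣ X; S=1]`)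
    (g q μ11 μ10 ρ0 ρ1 : E → ℝ)
    (hg : IsVersion P X S Set.univ g)
    (hg01 : ∀ᵐ ω ∂P, 0 < g (X ω) ∧ g (X ω) < 1)
    (hq : IsVersion P X A {ω | S ω = 1} q)
    -- (A1) consistency
    (hA1 : ∀ᵐ ω ∂P, Y ω = A ω * Y1 ω + (1 - A ω) * Y0 ω)
    -- (A2) exchangeability over A in the trial
    (hμ11obs : IsVersion P X Y {ω | S ω = 1 ∧ A ω = 1} μ11)
    (hμ11cf : IsVersion P X Y1 {ω | S ω = 1} μ11)
    (hμ10obs : IsVersion P X Y {ω | S ω = 1 ∧ A ω = 0} μ10)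
    (hμ10cf : IsVersion P X Y0 {ω | S ω = 1} μ10)
    -- (A3) positivity of treatment assignment in the trial
    (hA3 : ∀ᵐ ω ∂P, S ω = 1 → 0 < q (X ω) ∧ q (X ω) < 1)
    -- (A4) conditional transportability of relative effect measures
    (hρ0 : IsVersion P X Y0 {ω | S ω = 0} ρ0)
    (hρ1 : IsVersion P X Y1 {ω | S ω = 0} ρ1)
    (hA4 : ∀ᵐ ω ∂P, S ω = 0 →
      μ10 (X ω) ≠ 0 ∧ ρ0 (X ω) ≠ 0 ∧
        μ11 (X ω) / μ10 (X ω) = ρ1 (X ω) / ρ0 (X ω))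
    -- (A5) positivity of trial participation
    (hA5 : ∀ᵐ ω ∂P, 0 < g (X ω))
    -- (A6) uniform use of the control treatment in the target population
    (hA6 : ∀ᵐ ω ∂P, S ω = 0 → A ω = 0)
    -- integrability of the expression inside the identifying expectation
    (hint : Integrable (fun ω => μ11 (X ω) / μ10 (X ω) * Y ω) P) :
    condMean P Y1 {ω | S ω = 0}
      = condMean P (fun ω => μ11 (X ω) / μ10 (X ω) * Y ω) {ω | S ω = 0} :=
  treated_mean_identification_scenario1_general P X S A Y Y0 Y1 hX hS hY1int μ11 μ10 ρ0 ρ1 hA1 hρ0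
    hρ1 hA4 hA6 hint
end

section
/- Identification of the control counterfactual mean and of the contrasts (Theorem 1): under conditions (A1) and (A6), E[Y⁰ | S = 0] = E[Y | S = 0]. Consequently, under conditions (A1)–(A6), writing α₁ := E[(μ₁₁(X)/μ₁₀(X))·Y | S = 0] and β₁ := E[Y | S = 0], one has E[Y¹ − Y⁰ | S = 0] = α₁ − β₁, and if β₁ ≠ 0 then E[Y¹ | S = 0] / E[Y⁰ | S = 0] = α₁/β₁. -/
/-!
On `{S = 0}`, consistency and (A6) force `Y = Y⁰`, which identifies the control mean. For the
treated mean, with `B = {S = 0}`,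
`E[Y¹; B] = E[ρ₁(X); B] = E[ρ₀(X) · (ρ₁/ρ₀)(X); B] = E[Y⁰ · (ρ₁/ρ₀)(X); B]`,
and on `B` the weight `ρ₁/ρ₀` is `μ₁₁/μ₁₀` by (A4) while `Y⁰ = Y`. The last equality tests the
version `ρ₀` against the unbounded function `ρ₁/ρ₀`: a truncation argument makes `ρ₀(X)`
integrable on `B`, so it is the conditional expectation of `Y⁰` given `σ(X)` under `P` restricted
to `B`, and `σ(X)`-measurable factors pull out of that conditional expectation.
-/

open MeasureTheory

namespace IsVersion

variable {Ω E : Type*} [MeasurableSpace Ω] [MeasurableSpace E] {P : Measure Ω} {X : Ω → E}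
  {Z : Ω → ℝ} {B : Set Ω} {m : E → ℝ}

theorem setIntegral_eq (hv : IsVersion P X Z B m) :
    ∫ ω in B, Z ω ∂P = ∫ ω in B, m (X ω) ∂P := by
  simpa using hv.2 (fun _ => 1) measurable_const ⟨1, fun _ => by simp⟩

theorem setIntegral_preimage_eq (hX : Measurable X) (hv : IsVersion P X Z B m)
    {t : Set E} (ht : MeasurableSet t) :
    ∫ ω in X ⁻¹' t, Z ω ∂P.restrict B = ∫ ω in X ⁻¹' t, m (X ω) ∂P.restrict B := by
  have key := hv.2 (t.indicator 1) (measurable_const.indicator ht)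
    ⟨1, fun x => by by_cases hx : x ∈ t <;> simp [hx]⟩
  have hind (f : Ω → ℝ) :
      (fun ω => f ω * t.indicator 1 (X ω)) = (X ⁻¹' t).indicator f := by
    ext ω; by_cases hω : X ω ∈ t <;> simp [hω]
  rwa [hind, hind, integral_indicator (hX ht), integral_indicator (hX ht)] at key

theorem setIntegral_preimage_abs_le (hX : Measurable X) (hv : IsVersion P X Z B m)
    (hZ : Integrable Z (P.restrict B)) {t : Set E} (ht : MeasurableSet t) :
    ∫ ω in X ⁻¹' t, |m (X ω)| ∂P.restrict B ≤ ∫ ω, |Z ω| ∂P.restrict B := by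
  let h : E → ℝ := t.indicator fun x => if 0 ≤ m x then 1 else -1
  have hh : Measurable h :=
    (Measurable.ite (measurableSet_le measurable_const hv.1) measurable_const
      measurable_const).indicator ht
  have hhb (x : E) : |h x| ≤ 1 := by
    by_cases hx : x ∈ t <;> by_cases hm : 0 ≤ m x <;> simp [h, hx, hm]
  have hmh (ω : Ω) : (X ⁻¹' t).indicator (fun ω => |m (X ω)|) ω = m (X ω) * h (X ω) := by
    by_cases hω : X ω ∈ t
    · by_cases hm : 0 ≤ m (X ω)
      · simp [h, hω, hm, abs_of_nonneg hm]
      · simp [h, hω, hm, abs_of_neg (not_le.1 hm)]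
    · simp [h, hω]
  calc ∫ ω in X ⁻¹' t, |m (X ω)| ∂P.restrict B
      = ∫ ω in B, m (X ω) * h (X ω) ∂P := by
        rw [← integral_indicator (hX ht)]
        exact integral_congr_ae (.of_forall hmh)
    _ = ∫ ω in B, Z ω * h (X ω) ∂P := (hv.2 h hh ⟨1, hhb⟩).symm
    _ ≤ ∫ ω, |Z ω| ∂P.restrict B := by
        refine (le_abs_self _).trans <| (Real.norm_eq_abs _).symm.trans_le <|
          norm_integral_le_of_norm_le hZ.abs (.of_forall fun ω => ?_)
        rw [norm_mul, Real.norm_eq_abs, Real.norm_eq_abs]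
        exact mul_le_of_le_one_right (abs_nonneg _) (hhb _)

theorem integrable_comp [IsFiniteMeasure P] (hX : Measurable X) (hv : IsVersion P X Z B m)
    (hZ : Integrable Z (P.restrict B)) : Integrable (fun ω => m (X ω)) (P.restrict B) := by
  let s : ℕ → Set E := fun n => {x | |m x| ≤ n}
  have hs (n : ℕ) : MeasurableSet (s n) := measurableSet_le hv.1.abs measurable_const
  have hbound (n : ℕ) : ∫⁻ ω in X ⁻¹' s n, ‖m (X ω)‖ₑ ∂P.restrict B
      ≤ ENNReal.ofReal (∫ ω, |Z ω| ∂P.restrict B) := by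
    have hint : IntegrableOn (fun ω => m (X ω)) (X ⁻¹' s n) (P.restrict B) :=
      Measure.integrableOn_of_bounded (M := n) (measure_ne_top _ _)
        (hv.1.comp hX).aestronglyMeasurable
        ((ae_restrict_mem (hX (hs n))).mono fun ω hω => (Real.norm_eq_abs _).trans_le hω)
    rw [← ofReal_integral_norm_eq_lintegral_enorm hint]
    simp only [Real.norm_eq_abs]
    exact ENNReal.ofReal_le_ofReal (hv.setIntegral_preimage_abs_le hX hZ (hs n))
  have hcover : ⋃ n, X ⁻¹' s n = Set.univ := Set.eq_univ_of_forall fun ω =>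
    Set.mem_iUnion.2 ⟨⌈|m (X ω)|⌉₊, (Nat.le_ceil (|m (X ω)|) :)⟩
  refine ⟨(hv.1.comp hX).aestronglyMeasurable, ?_⟩
  rw [HasFiniteIntegral, ← setLIntegral_univ, ← hcover, setLIntegral_iUnion_of_directed]
  · exact (iSup_le hbound).trans_lt ENNReal.ofReal_lt_top
  · exact Monotone.directed_le fun a b hab ω (hω : _ ≤ _) =>
      (hω.trans (Nat.cast_le.2 hab) : |m (X ω)| ≤ b)

theorem comp_ae_eq_condExp [IsFiniteMeasure P] (hX : Measurable X) (hv : IsVersion P X Z B m)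
    (hZ : Integrable Z (P.restrict B)) :
    (fun ω => m (X ω)) =ᵐ[P.restrict B] (P.restrict B)[Z | .comap X ‹_›] := by
  refine ae_eq_condExp_of_forall_setIntegral_eq hX.comap_le hZ
    (fun _ _ _ => (hv.integrable_comp hX hZ).integrableOn) ?_
    (hv.1.comp (comap_measurable X)).aestronglyMeasurable
  rintro _ ⟨t, ht, rfl⟩ _
  exact (hv.setIntegral_preimage_eq hX ht).symm

theorem setIntegral_mul_comp_eq [IsFiniteMeasure P] (hX : Measurable X)
    (hv : IsVersion P X Z B m) (hZ : Integrable Z (P.restrict B)) {f : E → ℝ}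
    (hf : Measurable f) (hZf : Integrable (fun ω => Z ω * f (X ω)) (P.restrict B)) :
    ∫ ω in B, Z ω * f (X ω) ∂P = ∫ ω in B, m (X ω) * f (X ω) ∂P := by
  have hfX : StronglyMeasurable[.comap X ‹_›] (fun ω => f (X ω)) :=
    (hf.comp (comap_measurable X)).stronglyMeasurable
  have hfZ : Integrable ((fun ω => f (X ω)) * Z) (P.restrict B) :=
    hZf.congr (.of_forall fun ω => mul_comm (Z ω) (f (X ω)))
  calc ∫ ω in B, Z ω * f (X ω) ∂P
      = ∫ ω in B, (P.restrict B)[(fun ω => f (X ω)) * Z | .comap X ‹_›] ω ∂P := by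
        rw [integral_condExp hX.comap_le]; simp only [Pi.mul_apply, mul_comm]
    _ = ∫ ω in B, f (X ω) * (P.restrict B)[Z | .comap X ‹_›] ω ∂P :=
        integral_congr_ae (condExp_mul_of_stronglyMeasurable_left hfX hfZ hZ)
    _ = ∫ ω in B, m (X ω) * f (X ω) ∂P := by
        refine integral_congr_ae ?_
        filter_upwards [hv.comp_ae_eq_condExp hX hZ] with ω hω
        rw [hω, mul_comm]

theorem setIntegral_eq_mul_ratio [IsFiniteMeasure P] {Z₀ : Ω → ℝ} {ρ₀ : E → ℝ}
    (hX : Measurable X) (hv : IsVersion P X Z B m) (hv₀ : IsVersion P X Z₀ B ρ₀)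
    (hZ₀ : Integrable Z₀ (P.restrict B)) (hρ₀ : ∀ᵐ ω ∂P.restrict B, ρ₀ (X ω) ≠ 0)
    (hint : Integrable (fun ω => Z₀ ω * (m (X ω) / ρ₀ (X ω))) (P.restrict B)) :
    ∫ ω in B, Z ω ∂P = ∫ ω in B, Z₀ ω * (m (X ω) / ρ₀ (X ω)) ∂P := by
  rw [hv.setIntegral_eq,
    hv₀.setIntegral_mul_comp_eq hX hZ₀ (f := fun x => m x / ρ₀ x) (hv.1.div hv₀.1) hint]
  exact integral_congr_ae (hρ₀.mono fun ω hω => (mul_div_cancel₀ _ hω).symm)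

end IsVersion

section condMean

variable {Ω : Type*} [MeasurableSpace Ω] {P : Measure Ω} {B : Set Ω} {Z₁ Z₂ : Ω → ℝ}

theorem condMean_congr_ae (h : Z₁ =ᵐ[P.restrict B] Z₂) :
    condMean P Z₁ B = condMean P Z₂ B := by
  rw [condMean, condMean, integral_congr_ae h]

theorem condMean_sub (h₁ : IntegrableOn Z₁ B P) (h₂ : IntegrableOn Z₂ B P) :
    condMean P (fun ω => Z₁ ω - Z₂ ω) B = condMean P Z₁ B - condMean P Z₂ B := by
  rw [condMean, condMean, condMean, integral_sub h₁ h₂, sub_div]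

end condMean

theorem control_mean_and_contrasts_scenario1_general
    {Ω E : Type*} [MeasurableSpace Ω] [MeasurableSpace E]
    (P : Measure Ω) [IsProbabilityMeasure P]
    (X : Ω → E) (S A Y Y0 Y1 : Ω → ℝ)
    (hX : Measurable X) (hS : Measurable S)
    (hY0int : Integrable Y0 P) (hY1int : Integrable Y1 P)
    (g q μ11 μ10 ρ0 ρ1 : E → ℝ)
    -- integrability of the expression inside the identifying expectation
    (hint : Integrable (fun ω => μ11 (X ω) / μ10 (X ω) * Y ω) P)
    -- (A1) consistency
    (hA1 : ∀ᵐ ω ∂P, Y ω = A ω * Y1 ω + (1 - A ω) * Y0 ω)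
    -- (A6) uniform use of the control treatment in the target population
    (hA6 : ∀ᵐ ω ∂P, S ω = 0 → A ω = 0) :
    -- under (A1) and (A6):
    condMean P Y0 {ω | S ω = 0} = condMean P Y {ω | S ω = 0} ∧
    -- under the remaining conditions (A2)–(A5) together with the fixed versions g, q:
    (IsVersion P X S Set.univ g →
     (∀ᵐ ω ∂P, 0 < g (X ω) ∧ g (X ω) < 1) →
     IsVersion P X A {ω | S ω = 1} q →
     -- (A2)
     IsVersion P X Y {ω | S ω = 1 ∧ A ω = 1} μ11 →
     IsVersion P X Y1 {ω | S ω = 1} μ11 →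
     IsVersion P X Y {ω | S ω = 1 ∧ A ω = 0} μ10 →
     IsVersion P X Y0 {ω | S ω = 1} μ10 →
     -- (A3)
     (∀ᵐ ω ∂P, S ω = 1 → 0 < q (X ω) ∧ q (X ω) < 1) →
     -- (A4)
     IsVersion P X Y0 {ω | S ω = 0} ρ0 →
     IsVersion P X Y1 {ω | S ω = 0} ρ1 →
     (∀ᵐ ω ∂P, S ω = 0 →
       μ10 (X ω) ≠ 0 ∧ ρ0 (X ω) ≠ 0 ∧
         μ11 (X ω) / μ10 (X ω) = ρ1 (X ω) / ρ0 (X ω)) →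
     -- (A5)
     (∀ᵐ ω ∂P, 0 < g (X ω)) →
     (condMean P (fun ω => Y1 ω - Y0 ω) {ω | S ω = 0}
        = condMean P (fun ω => μ11 (X ω) / μ10 (X ω) * Y ω) {ω | S ω = 0}
          - condMean P Y {ω | S ω = 0} ∧
      (condMean P Y {ω | S ω = 0} ≠ 0 →
        condMean P Y1 {ω | S ω = 0} / condMean P Y0 {ω | S ω = 0}
          = condMean P (fun ω => μ11 (X ω) / μ10 (X ω) * Y ω) {ω | S ω = 0}
            / condMean P Y {ω | S ω = 0}))) := by
  set B := {ω | S ω = 0}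
  have hS0 : ∀ᵐ ω ∂P.restrict B, S ω = 0 := ae_restrict_mem (hS (measurableSet_singleton 0))
  have hYY0 : Y =ᵐ[P.restrict B] Y0 := by
    filter_upwards [hS0, ae_restrict_of_ae hA1, ae_restrict_of_ae hA6] with ω h0 h1 h6
    rw [h1, h6 h0]
    ring
  have hβ : condMean P Y0 B = condMean P Y B := condMean_congr_ae hYY0.symm
  refine ⟨hβ, fun _ _ _ _ _ _ _ _ hρ0 hρ1 hA4 _ => ?_⟩
  have hA4B := ae_restrict_of_ae (s := B) hA4
  have hratio : (fun ω => μ11 (X ω) / μ10 (X ω) * Y ω)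
      =ᵐ[P.restrict B] fun ω => Y0 ω * (ρ1 (X ω) / ρ0 (X ω)) := by
    filter_upwards [hS0, hYY0, hA4B] with ω h0 hY h4
    rw [(h4 h0).2.2, hY, mul_comm]
  have hα : condMean P Y1 B = condMean P (fun ω => μ11 (X ω) / μ10 (X ω) * Y ω) B := by
    rw [condMean_congr_ae hratio, condMean, condMean,
      hρ1.setIntegral_eq_mul_ratio hX hρ0 hY0int.restrict
        (by filter_upwards [hS0, hA4B] with ω h0 h4 using (h4 h0).2.1)
        (hint.restrict.congr hratio)]
  exact ⟨by rw [condMean_sub hY1int.integrableOn hY0int.integrableOn, hα, hβ],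
    fun _ => by rw [hα, hβ]⟩

/-- Theorem 1, control mean and contrasts (Scenario 1).  Under (A1) and (A6) alone,
`E[Y⁰ ∣ S = 0] = E[Y ∣ S = 0]`; consequently, under (A1)–(A6) (the remaining conditions
appear as hypotheses of the second conjunct), with
`α₁ = E[(μ₁₁(X)/μ₁₀(X))·Y ∣ S = 0]` and `β₁ = E[Y ∣ S = 0]`, one has
`E[Y¹ − Y⁰ ∣ S = 0] = α₁ − β₁` and, if `β₁ ≠ 0`,
`E[Y¹ ∣ S = 0] / E[Y⁰ ∣ S = 0] = α₁ / β₁`. -/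
theorem control_mean_and_contrasts_scenario1
    {Ω E : Type*} [MeasurableSpace Ω] [MeasurableSpace E]
    (P : Measure Ω) [IsProbabilityMeasure P]
    (X : Ω → E) (S A Y Y0 Y1 : Ω → ℝ)
    (hX : Measurable X) (hS : Measurable S) (hA : Measurable A) (hY : Measurable Y)
    (hS01 : ∀ ω, S ω = 0 ∨ S ω = 1) (hA01 : ∀ ω, A ω = 0 ∨ A ω = 1)
    (hPS0 : 0 < P {ω | S ω = 0})
    (hPS1A1 : 0 < P {ω | S ω = 1 ∧ A ω = 1})
    (hPS1A0 : 0 < P {ω | S ω = 1 ∧ A ω = 0})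
    (hYint : Integrable Y P) (hY0int : Integrable Y0 P) (hY1int : Integrable Y1 P)
    (g q μ11 μ10 ρ0 ρ1 : E → ℝ)
    -- integrability of the expression inside the identifying expectation
    (hint : Integrable (fun ω => μ11 (X ω) / μ10 (X ω) * Y ω) P)
    -- (A1) consistency
    (hA1 : ∀ᵐ ω ∂P, Y ω = A ω * Y1 ω + (1 - A ω) * Y0 ω)
    -- (A6) uniform use of the control treatment in the target population
    (hA6 : ∀ᵐ ω ∂P, S ω = 0 → A ω = 0) :
    -- under (A1) and (A6):
    condMean P Y0 {ω | S ω = 0} = condMean P Y {ω | S ω = 0} ∧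
    -- under the remaining conditions (A2)–(A5) together with the fixed versions g, q:
    (IsVersion P X S Set.univ g →
     (∀ᵐ ω ∂P, 0 < g (X ω) ∧ g (X ω) < 1) →
     IsVersion P X A {ω | S ω = 1} q →
     -- (A2)
     IsVersion P X Y {ω | S ω = 1 ∧ A ω = 1} μ11 →
     IsVersion P X Y1 {ω | S ω = 1} μ11 →
     IsVersion P X Y {ω | S ω = 1 ∧ A ω = 0} μ10 →
     IsVersion P X Y0 {ω | S ω = 1} μ10 →
     -- (A3)
     (∀ᵐ ω ∂P, S ω = 1 → 0 < q (X ω) ∧ q (X ω) < 1) →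
     -- (A4)
     IsVersion P X Y0 {ω | S ω = 0} ρ0 →
     IsVersion P X Y1 {ω | S ω = 0} ρ1 →
     (∀ᵐ ω ∂P, S ω = 0 →
       μ10 (X ω) ≠ 0 ∧ ρ0 (X ω) ≠ 0 ∧
         μ11 (X ω) / μ10 (X ω) = ρ1 (X ω) / ρ0 (X ω)) →
     -- (A5)
     (∀ᵐ ω ∂P, 0 < g (X ω)) →
     (condMean P (fun ω => Y1 ω - Y0 ω) {ω | S ω = 0}
        = condMean P (fun ω => μ11 (X ω) / μ10 (X ω) * Y ω) {ω | S ω = 0}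
          - condMean P Y {ω | S ω = 0} ∧
      (condMean P Y {ω | S ω = 0} ≠ 0 →
        condMean P Y1 {ω | S ω = 0} / condMean P Y0 {ω | S ω = 0}
          = condMean P (fun ω => μ11 (X ω) / μ10 (X ω) * Y ω) {ω | S ω = 0}
            / condMean P Y {ω | S ω = 0}))) :=
  control_mean_and_contrasts_scenario1_general P X S A Y Y0 Y1 hX hS hY0int hY1int g q μ11 μ10 ρ0 ρ1
    hint hA1 hA6
end

section
/- Alternative identification formulas for Scenario 1 (Proposition in Supplement B): under conditions (A1)–(A6), each of the following equals E[Y¹ | S = 0]: (i) E[ (μ₁₁(X)/μ₁₀(X)) · m₀(X) | S = 0 ]; (ii) P(S=0)⁻¹ · E[ τ(X) · (m₀(X)/μ₁₀(X)) · S·A·Y / q(X) ]; (iii) P(S=0)⁻¹ · E[ (μ₁₁(X)/μ₁₀(X)) · (m₀(X)/μ₁₀(X)) · τ(X) · S·(1−A)·Y / (1−q(X)) ]. -/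
/-!
On `{S = 0}` we have `A = 0`, so `Y = Y⁰` there and the versions `m₀` and `ρ₀` agree a.e.; by (A4),
`E[Y¹ ∣ S = 0] = E[ρ₁(X) ∣ S = 0] = E[(μ₁₁/μ₁₀)(X) · ρ₀(X) ∣ S = 0]`, which is (i).
For (ii) and (iii), conditioning on `X` replaces `Y` on `{S = 1, A = a}` by `μ₁ₐ(X)` and then the
treatment indicator by its propensity, which the weight `1/q` (resp. `1/(1 - q)`) cancels; this
leaves `E[τ(X) φ(X); S = 1]` with `φ = (μ₁₁/μ₁₀) m₀`. Since `g(X) = P(S = 1 ∣ X)`, the odds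
`τ = (1 - g)/g` transport this to `E[φ(X); S = 0]`, i.e. to (i).
Each conditioning step is `E[Z f(X); B] = E[m(X) f(X); B]` for a version `m` of `E[Z ∣ X; B]`,
which follows by identifying `m(X)` with the conditional expectation given `σ(X)` once `m(X)` is
known to be integrable.
-/

open MeasureTheory

open Set

namespace IsVersion

variable {Ω E : Type*} [MeasurableSpace Ω] [MeasurableSpace E] {P : Measure Ω} [IsFiniteMeasure P]
  {X : Ω → E} {Z : Ω → ℝ} {B : Set Ω} {m : E → ℝ}

/-- Test against the sign of `m`, truncated to `{|m| ≤ c}`. -/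
theorem setLIntegral_enorm_comp_le (hm : IsVersion P X Z B m) (hX : Measurable X)
    (hZ : IntegrableOn Z B P) (c : ℝ) :
    ∫⁻ ω in X ⁻¹' {x | |m x| ≤ c}, ‖m (X ω)‖ₑ ∂P.restrict B
      ≤ ENNReal.ofReal (∫ ω in B, |Z ω| ∂P) := by
  let T : Set E := {x | |m x| ≤ c}
  have hT : MeasurableSet T := measurableSet_le hm.1.abs measurable_const
  let h : E → ℝ := T.indicator fun x => if 0 ≤ m x then 1 else -1
  have hh : Measurable h :=
    (Measurable.ite (measurableSet_le measurable_const hm.1) measurable_const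
      measurable_const).indicator hT
  have hh1 : ∀ x, |h x| ≤ 1 := fun x => by
    by_cases hx : x ∈ T <;> by_cases hm0 : 0 ≤ m x <;> simp [h, hx, hm0]
  have hmh : ∀ ω, m (X ω) * h (X ω) = (X ⁻¹' T).indicator (fun ω => ‖m (X ω)‖) ω := by
    intro ω
    by_cases hω : X ω ∈ T
    · by_cases hm0 : 0 ≤ m (X ω)
      · simp [h, hω, hm0, abs_of_nonneg]
      · simp [h, hω, hm0, abs_of_neg (not_le.1 hm0)]
    · simp [h, hω]
  have hZh : IntegrableOn (fun ω => Z ω * h (X ω)) B P :=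
    hZ.mul_bdd (hh.comp hX).aestronglyMeasurable (ae_of_all _ fun ω => hh1 (X ω))
  have hmXT : IntegrableOn (fun ω => m (X ω)) (X ⁻¹' T) (P.restrict B) :=
    Measure.integrableOn_of_bounded (measure_ne_top _ _) (hm.1.comp hX).aestronglyMeasurable
      ((ae_restrict_mem (hX hT)).mono fun ω hω => hω)
  rw [← ofReal_integral_norm_eq_lintegral_enorm hmXT, ← integral_indicator (hX hT)]
  refine ENNReal.ofReal_le_ofReal ?_
  calc ∫ ω, (X ⁻¹' T).indicator (fun ω => ‖m (X ω)‖) ω ∂P.restrict B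
      = ∫ ω in B, Z ω * h (X ω) ∂P := by
        rw [hm.2 h hh ⟨1, hh1⟩]
        exact integral_congr_ae (ae_of_all _ fun ω => (hmh ω).symm)
    _ ≤ ∫ ω in B, |Z ω| ∂P := integral_mono hZh hZ.abs fun ω => by
        calc Z ω * h (X ω) ≤ |Z ω| * |h (X ω)| := (le_abs_self _).trans_eq (abs_mul _ _)
          _ ≤ |Z ω| := mul_le_of_le_one_right (abs_nonneg _) (hh1 (X ω))

theorem integrableOn_comp (hm : IsVersion P X Z B m) (hX : Measurable X)
    (hZ : IntegrableOn Z B P) : IntegrableOn (fun ω => m (X ω)) B P := by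
  let T : ℕ → Set Ω := fun n => X ⁻¹' {x | |m x| ≤ n}
  have hunion : (⋃ n, T n) = univ := iUnion_eq_univ_iff.2 fun ω => exists_nat_ge |m (X ω)|
  have hmono : Monotone T := fun i j hij ω (hω : |m (X ω)| ≤ i) =>
    (show |m (X ω)| ≤ j from hω.trans (Nat.cast_le.2 hij))
  refine ⟨(hm.1.comp hX).aestronglyMeasurable, ?_⟩
  rw [HasFiniteIntegral, ← Measure.restrict_univ (μ := P.restrict B), ← hunion,
    setLIntegral_iUnion_of_directed _ hmono.directed_le]
  exact (iSup_le fun n : ℕ => hm.setLIntegral_enorm_comp_le hX hZ n).trans_lt ENNReal.ofReal_lt_top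

theorem ae_eq_condExp (hm : IsVersion P X Z B m) (hX : Measurable X) (hZ : IntegrableOn Z B P) :
    (fun ω => m (X ω)) =ᵐ[P.restrict B] (P.restrict B)[Z | MeasurableSpace.comap X ‹_›] := by
  refine ae_eq_condExp_of_forall_setIntegral_eq hX.comap_le hZ
    (fun _ _ _ => (hm.integrableOn_comp hX hZ).integrableOn) ?_
    (hm.1.comp (comap_measurable X)).aestronglyMeasurable
  rintro _ ⟨u, hu, rfl⟩ -
  have hind : ∀ F : Ω → ℝ,
      ∫ ω in X ⁻¹' u, F ω ∂P.restrict B = ∫ ω in B, F ω * u.indicator 1 (X ω) ∂P := by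
    intro F
    rw [← integral_indicator (hX hu)]
    congr 1 with ω
    by_cases hω : X ω ∈ u <;> simp [hω]
  rw [hind, hind, hm.2 _ (measurable_one.indicator hu) ⟨1, fun x => ?_⟩]
  by_cases hx : x ∈ u <;> simp [hx]

theorem ae_eq_condExp_mul (hm : IsVersion P X Z B m) (hX : Measurable X) (hZ : IntegrableOn Z B P)
    {f : E → ℝ} (hf : Measurable f) (hZf : IntegrableOn (fun ω => Z ω * f (X ω)) B P) :
    (fun ω => m (X ω) * f (X ω)) =ᵐ[P.restrict B]
      (P.restrict B)[fun ω => Z ω * f (X ω) | MeasurableSpace.comap X ‹_›] := by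
  have hpull := condExp_mul_of_stronglyMeasurable_right (m := MeasurableSpace.comap X ‹_›)
    (g := f ∘ X) (hf.comp (comap_measurable X)).stronglyMeasurable hZf hZ
  filter_upwards [hm.ae_eq_condExp hX hZ, hpull] with ω hmω hω
  rw [hmω]
  exact hω.symm

theorem integrableOn_mul_comp (hm : IsVersion P X Z B m) (hX : Measurable X)
    (hZ : IntegrableOn Z B P) {f : E → ℝ} (hf : Measurable f)
    (hZf : IntegrableOn (fun ω => Z ω * f (X ω)) B P) :
    IntegrableOn (fun ω => m (X ω) * f (X ω)) B P :=
  integrable_condExp.congr (hm.ae_eq_condExp_mul hX hZ hf hZf).symm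

theorem setIntegral_mul_comp (hm : IsVersion P X Z B m) (hX : Measurable X)
    (hZ : IntegrableOn Z B P) {f : E → ℝ} (hf : Measurable f)
    (hZf : IntegrableOn (fun ω => Z ω * f (X ω)) B P) :
    ∫ ω in B, Z ω * f (X ω) ∂P = ∫ ω in B, m (X ω) * f (X ω) ∂P := by
  rw [integral_congr_ae (hm.ae_eq_condExp_mul hX hZ hf hZf), integral_condExp hX.comap_le]

theorem ae_eq_of_ae_eq {Z' : Ω → ℝ} {m' : E → ℝ} (hm : IsVersion P X Z B m)
    (hm' : IsVersion P X Z' B m') (hX : Measurable X) (hZ : IntegrableOn Z B P)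
    (hZZ' : Z =ᵐ[P.restrict B] Z') :
    (fun ω => m (X ω)) =ᵐ[P.restrict B] fun ω => m' (X ω) :=
  (hm.ae_eq_condExp hX hZ).trans <| (condExp_congr_ae hZZ').trans
    (hm'.ae_eq_condExp hX (hZ.congr_fun_ae hZZ')).symm

theorem const_sub (hm : IsVersion P X Z B m) (hX : Measurable X) (hZ : IntegrableOn Z B P)
    (c : ℝ) : IsVersion P X (fun ω => c - Z ω) B (fun x => c - m x) := by
  refine ⟨measurable_const.sub hm.1, fun h hh ⟨C, hC⟩ => ?_⟩
  have hbdd : ∀ᵐ ω ∂P.restrict B, ‖h (X ω)‖ ≤ C := ae_of_all _ fun ω => hC (X ω)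
  have hhX : IntegrableOn (fun ω => h (X ω)) B P :=
    Integrable.of_bound (hh.comp hX).aestronglyMeasurable C hbdd
  have hZh : IntegrableOn (fun ω => Z ω * h (X ω)) B P :=
    hZ.mul_bdd (hh.comp hX).aestronglyMeasurable hbdd
  simp only [sub_mul]
  rw [integral_sub (hhX.const_mul c) hZh,
    integral_sub (hhX.const_mul c) (hm.integrableOn_mul_comp hX hZ hh hZh), hm.2 h hh ⟨C, hC⟩]

end IsVersion

section ZeroOne

variable {Ω : Type*} {A : Ω → ℝ}

theorem mul_eq_indicator_of_zero_or_one (hA : ∀ ω, A ω = 0 ∨ A ω = 1) (F : Ω → ℝ) :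
    (fun ω => A ω * F ω) = {ω | A ω = 1}.indicator F := by
  ext ω
  rcases hA ω with h | h <;> simp [h]

theorem one_sub_zero_or_one (hA : ∀ ω, A ω = 0 ∨ A ω = 1) (ω : Ω) :
    1 - A ω = 0 ∨ 1 - A ω = 1 := by
  rcases hA ω with h | h <;> simp [h]

variable [MeasurableSpace Ω] {P : Measure Ω}

theorem setIntegral_mul_of_zero_or_one (hA : ∀ ω, A ω = 0 ∨ A ω = 1) (hAm : Measurable A)
    (B : Set Ω) (F : Ω → ℝ) :
    ∫ ω in B, A ω * F ω ∂P = ∫ ω in B ∩ {ω | A ω = 1}, F ω ∂P := by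
  have hT : MeasurableSet {ω | A ω = 1} := hAm (measurableSet_singleton 1)
  rw [mul_eq_indicator_of_zero_or_one hA, setIntegral_indicator hT]

theorem integrableOn_mul_iff_of_zero_or_one (hA : ∀ ω, A ω = 0 ∨ A ω = 1) (hAm : Measurable A)
    {B : Set Ω} {F : Ω → ℝ} :
    IntegrableOn (fun ω => A ω * F ω) B P ↔ IntegrableOn F (B ∩ {ω | A ω = 1}) P := by
  have hT : MeasurableSet {ω | A ω = 1} := hAm (measurableSet_singleton 1)
  rw [mul_eq_indicator_of_zero_or_one hA, integrableOn_indicator_iff hT, inter_comm]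

theorem integrable_of_zero_or_one [IsFiniteMeasure P] (hA : ∀ ω, A ω = 0 ∨ A ω = 1)
    (hAm : Measurable A) : Integrable A P :=
  Integrable.of_bound hAm.aestronglyMeasurable 1 <| ae_of_all _ fun ω => by
    rcases hA ω with h | h <;> simp [h]

end ZeroOne

section Identification

variable {Ω E : Type*} [MeasurableSpace Ω] [MeasurableSpace E] {P : Measure Ω} [IsFiniteMeasure P]
  {X : Ω → E}

theorem setIntegral_mul_eq_of_isVersion {B : Set Ω} {A Y : Ω → ℝ} {q μ k : E → ℝ}
    (hX : Measurable X) (hA : ∀ ω, A ω = 0 ∨ A ω = 1) (hAm : Measurable A)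
    (hq : IsVersion P X A B q) (hμ : IsVersion P X Y (B ∩ {ω | A ω = 1}) μ)
    (hY : IntegrableOn Y (B ∩ {ω | A ω = 1}) P) (hk : Measurable k)
    (hAYk : IntegrableOn (fun ω => A ω * (Y ω * k (X ω))) B P) :
    IntegrableOn (fun ω => q (X ω) * (μ (X ω) * k (X ω))) B P ∧
      ∫ ω in B, A ω * (Y ω * k (X ω)) ∂P = ∫ ω in B, q (X ω) * (μ (X ω) * k (X ω)) ∂P := by
  have hYk := (integrableOn_mul_iff_of_zero_or_one hA hAm).1 hAYk
  have hAμk : IntegrableOn (fun ω => A ω * (μ (X ω) * k (X ω))) B P :=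
    (integrableOn_mul_iff_of_zero_or_one hA hAm).2 (hμ.integrableOn_mul_comp hX hY hk hYk)
  have hAint : IntegrableOn A B P := (integrable_of_zero_or_one hA hAm).integrableOn
  refine ⟨hq.integrableOn_mul_comp hX hAint (f := fun x => μ x * k x) (hμ.1.mul hk) hAμk, ?_⟩
  rw [setIntegral_mul_of_zero_or_one hA hAm, hμ.setIntegral_mul_comp hX hY hk hYk,
    ← setIntegral_mul_of_zero_or_one hA hAm]
  exact hq.setIntegral_mul_comp hX hAint (f := fun x => μ x * k x) (hμ.1.mul hk) hAμk

theorem integral_div_propensity_eq {S A Y : Ω → ℝ} {q μ c : E → ℝ} (hX : Measurable X)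
    (hS : ∀ ω, S ω = 0 ∨ S ω = 1) (hSm : Measurable S)
    (hA : ∀ ω, A ω = 0 ∨ A ω = 1) (hAm : Measurable A)
    (hq : IsVersion P X A {ω | S ω = 1} q) (hμ : IsVersion P X Y {ω | S ω = 1 ∧ A ω = 1} μ)
    (hY : Integrable Y P) (hq0 : ∀ᵐ ω ∂P, S ω = 1 → q (X ω) ≠ 0) (hc : Measurable c)
    (hint : Integrable (fun ω => c (X ω) * (S ω * A ω * Y ω) / q (X ω)) P) :
    IntegrableOn (fun ω => μ (X ω) * c (X ω)) {ω | S ω = 1} P ∧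
      ∫ ω, c (X ω) * (S ω * A ω * Y ω) / q (X ω) ∂P
        = ∫ ω in {ω | S ω = 1}, μ (X ω) * c (X ω) ∂P := by
  have hform : (fun ω => c (X ω) * (S ω * A ω * Y ω) / q (X ω))
      = fun ω => S ω * (A ω * (Y ω * (c (X ω) / q (X ω)))) := by
    ext ω
    ring
  have hAYk : IntegrableOn (fun ω => A ω * (Y ω * (c (X ω) / q (X ω)))) {ω | S ω = 1} P := by
    rw [hform, ← integrableOn_univ, integrableOn_mul_iff_of_zero_or_one hS hSm, univ_inter] at hint
    exact hint
  obtain ⟨hqμk, heq⟩ := setIntegral_mul_eq_of_isVersion (k := fun x => c x / q x) hX hA hAm hq hμ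
    hY.integrableOn (hc.div hq.1) hAYk
  have hcancel : (fun ω => q (X ω) * (μ (X ω) * (c (X ω) / q (X ω))))
      =ᵐ[P.restrict {ω | S ω = 1}] fun ω => μ (X ω) * c (X ω) := by
    filter_upwards [ae_restrict_of_ae hq0, ae_restrict_mem (hSm (measurableSet_singleton 1))]
      with ω hq0ω hω
    field_simp [hq0ω hω]
  refine ⟨hqμk.congr hcancel, ?_⟩
  rw [hform, ← setIntegral_univ, setIntegral_mul_of_zero_or_one hS hSm, univ_inter, heq]
  exact integral_congr_ae hcancel

theorem integral_div_one_sub_propensity_eq {S A Y : Ω → ℝ} {q μ c : E → ℝ} (hX : Measurable X)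
    (hS : ∀ ω, S ω = 0 ∨ S ω = 1) (hSm : Measurable S)
    (hA : ∀ ω, A ω = 0 ∨ A ω = 1) (hAm : Measurable A)
    (hq : IsVersion P X A {ω | S ω = 1} q) (hμ : IsVersion P X Y {ω | S ω = 1 ∧ A ω = 0} μ)
    (hY : Integrable Y P) (hq1 : ∀ᵐ ω ∂P, S ω = 1 → q (X ω) ≠ 1) (hc : Measurable c)
    (hint : Integrable (fun ω => c (X ω) * (S ω * (1 - A ω) * Y ω) / (1 - q (X ω))) P) :
    IntegrableOn (fun ω => μ (X ω) * c (X ω)) {ω | S ω = 1} P ∧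
      ∫ ω, c (X ω) * (S ω * (1 - A ω) * Y ω) / (1 - q (X ω)) ∂P
        = ∫ ω in {ω | S ω = 1}, μ (X ω) * c (X ω) ∂P := by
  have hset : {ω | S ω = 1 ∧ 1 - A ω = 1} = {ω | S ω = 1 ∧ A ω = 0} := by
    ext ω
    simp
  refine integral_div_propensity_eq hX hS hSm (one_sub_zero_or_one hA) (measurable_const.sub hAm)
    (hq.const_sub hX (integrable_of_zero_or_one hA hAm).integrableOn 1) (hset ▸ hμ) hY
    (hq1.mono fun ω h hω => sub_ne_zero.2 (h hω).symm) hc hint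

theorem setIntegral_odds_mul_eq {S : Ω → ℝ} {g f : E → ℝ} (hX : Measurable X)
    (hS : ∀ ω, S ω = 0 ∨ S ω = 1) (hSm : Measurable S) (hg : IsVersion P X S univ g)
    (hg0 : ∀ᵐ ω ∂P, g (X ω) ≠ 0) (hf : Measurable f) (hfX : Integrable (fun ω => f (X ω)) P)
    (hτf : IntegrableOn (fun ω => (1 - g (X ω)) / g (X ω) * f (X ω)) {ω | S ω = 1} P) :
    ∫ ω in {ω | S ω = 1}, (1 - g (X ω)) / g (X ω) * f (X ω) ∂P
      = ∫ ω in {ω | S ω = 0}, f (X ω) ∂P := by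
  have hSint : IntegrableOn S univ P := (integrable_of_zero_or_one hS hSm).integrableOn
  have hS' := one_sub_zero_or_one hS
  have hS'm : Measurable fun ω => 1 - S ω := measurable_const.sub hSm
  have hS'int : IntegrableOn (fun ω => 1 - S ω) univ P :=
    (integrable_of_zero_or_one hS' hS'm).integrableOn
  have hSτf : IntegrableOn (fun ω => S ω * ((1 - g (X ω)) / g (X ω) * f (X ω))) univ P := by
    rwa [integrableOn_mul_iff_of_zero_or_one hS hSm, univ_inter]
  have hS'f : IntegrableOn (fun ω => (1 - S ω) * f (X ω)) univ P :=
    (integrableOn_mul_iff_of_zero_or_one hS' hS'm).2 hfX.integrableOn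
  have hset : univ ∩ {ω | 1 - S ω = 1} = {ω | S ω = 0} := by
    ext ω
    simp
  calc ∫ ω in {ω | S ω = 1}, (1 - g (X ω)) / g (X ω) * f (X ω) ∂P
      = ∫ ω in univ, S ω * ((1 - g (X ω)) / g (X ω) * f (X ω)) ∂P := by
        rw [setIntegral_mul_of_zero_or_one hS hSm, univ_inter]
    _ = ∫ ω in univ, g (X ω) * ((1 - g (X ω)) / g (X ω) * f (X ω)) ∂P :=
        hg.setIntegral_mul_comp hX hSint (f := fun x => (1 - g x) / g x * f x)
          (((measurable_const.sub hg.1).div hg.1).mul hf) hSτf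
    _ = ∫ ω in univ, (1 - g (X ω)) * f (X ω) ∂P := by
        refine integral_congr_ae ?_
        filter_upwards [ae_restrict_of_ae hg0] with ω hω
        field_simp
    _ = ∫ ω in univ, (1 - S ω) * f (X ω) ∂P :=
        ((hg.const_sub hX hSint 1).setIntegral_mul_comp hX hS'int hf hS'f).symm
    _ = ∫ ω in {ω | S ω = 0}, f (X ω) ∂P := by
        rw [setIntegral_mul_of_zero_or_one hS' hS'm, hset]

theorem setIntegral_eq_ratio_mul {B : Set Ω} {Y Y0 Y1 : Ω → ℝ} {m0 ρ0 ρ1 r : E → ℝ}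
    (hX : Measurable X) (hm0 : IsVersion P X Y B m0) (hρ0 : IsVersion P X Y0 B ρ0)
    (hρ1 : IsVersion P X Y1 B ρ1) (hY : IntegrableOn Y B P) (hYY0 : Y =ᵐ[P.restrict B] Y0)
    (hr : ∀ᵐ ω ∂P.restrict B, ρ0 (X ω) ≠ 0 ∧ r (X ω) = ρ1 (X ω) / ρ0 (X ω)) :
    ∫ ω in B, Y1 ω ∂P = ∫ ω in B, r (X ω) * m0 (X ω) ∂P := by
  have hρ1int : ∫ ω in B, Y1 ω ∂P = ∫ ω in B, ρ1 (X ω) ∂P := by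
    simpa using hρ1.2 (fun _ => 1) measurable_const ⟨1, fun _ => abs_one.le⟩
  rw [hρ1int]
  refine integral_congr_ae ?_
  filter_upwards [hr, hm0.ae_eq_of_ae_eq hρ0 hX hY hYY0] with ω ⟨hρ0ω, hrω⟩ hmω
  rw [hrω, hmω, div_mul_cancel₀ _ hρ0ω]

end Identification

theorem alternative_identification_scenario1_general
    {Ω E : Type*} [MeasurableSpace Ω] [MeasurableSpace E]
    (P : Measure Ω) [IsProbabilityMeasure P]
    (X : Ω → E) (S A Y Y0 Y1 : Ω → ℝ)
    (hX : Measurable X) (hS : Measurable S) (hA : Measurable A)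
    (hS01 : ∀ ω, S ω = 0 ∨ S ω = 1) (hA01 : ∀ ω, A ω = 0 ∨ A ω = 1)
    (hYint : Integrable Y P)
    (g q μ11 μ10 ρ0 ρ1 m0 : E → ℝ)
    (hg : IsVersion P X S Set.univ g)
    (hq : IsVersion P X A {ω | S ω = 1} q)
    -- m₀ is a version of E[Y ∣ X; S = 0]
    (hm0 : IsVersion P X Y {ω | S ω = 0} m0)
    -- (A1)
    (hA1 : ∀ᵐ ω ∂P, Y ω = A ω * Y1 ω + (1 - A ω) * Y0 ω)
    -- (A2)
    (hμ11obs : IsVersion P X Y {ω | S ω = 1 ∧ A ω = 1} μ11)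
    (hμ10obs : IsVersion P X Y {ω | S ω = 1 ∧ A ω = 0} μ10)
    -- (A3)
    (hA3 : ∀ᵐ ω ∂P, S ω = 1 → 0 < q (X ω) ∧ q (X ω) < 1)
    -- (A4)
    (hρ0 : IsVersion P X Y0 {ω | S ω = 0} ρ0)
    (hρ1 : IsVersion P X Y1 {ω | S ω = 0} ρ1)
    (hA4 : ∀ᵐ ω ∂P, S ω = 0 →
      μ10 (X ω) ≠ 0 ∧ ρ0 (X ω) ≠ 0 ∧
        μ11 (X ω) / μ10 (X ω) = ρ1 (X ω) / ρ0 (X ω))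
    -- (A5)
    (hA5 : ∀ᵐ ω ∂P, 0 < g (X ω))
    -- (A6)
    (hA6 : ∀ᵐ ω ∂P, S ω = 0 → A ω = 0)
    -- integrability of the expressions inside the expectations below
    (hint1 : Integrable (fun ω => μ11 (X ω) / μ10 (X ω) * m0 (X ω)) P)
    (hint2 : Integrable (fun ω =>
      (1 - g (X ω)) / g (X ω) * (m0 (X ω) / μ10 (X ω)) * (S ω * A ω * Y ω) / q (X ω)) P)
    (hint3 : Integrable (fun ω =>
      μ11 (X ω) / μ10 (X ω) * (m0 (X ω) / μ10 (X ω)) * ((1 - g (X ω)) / g (X ω)) *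
        (S ω * (1 - A ω) * Y ω) / (1 - q (X ω))) P) :
    condMean P Y1 {ω | S ω = 0}
      = condMean P (fun ω => μ11 (X ω) / μ10 (X ω) * m0 (X ω)) {ω | S ω = 0} ∧
    condMean P Y1 {ω | S ω = 0}
      = (P {ω | S ω = 0}).toReal⁻¹ *
          ∫ ω, (1 - g (X ω)) / g (X ω) * (m0 (X ω) / μ10 (X ω)) *
            (S ω * A ω * Y ω) / q (X ω) ∂P ∧
    condMean P Y1 {ω | S ω = 0}
      = (P {ω | S ω = 0}).toReal⁻¹ *
          ∫ ω, μ11 (X ω) / μ10 (X ω) * (m0 (X ω) / μ10 (X ω)) *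
            ((1 - g (X ω)) / g (X ω)) * (S ω * (1 - A ω) * Y ω) / (1 - q (X ω)) ∂P := by
  have hS0 : MeasurableSet {ω | S ω = 0} := hS (measurableSet_singleton 0)
  have hYY0 : Y =ᵐ[P.restrict {ω | S ω = 0}] Y0 := by
    filter_upwards [ae_restrict_of_ae hA1, ae_restrict_of_ae hA6, ae_restrict_mem hS0]
      with ω hYω hAω hω
    rw [hYω, hAω hω]
    ring
  have hi := setIntegral_eq_ratio_mul (r := fun x => μ11 x / μ10 x) hX hm0 hρ0 hρ1
    hYint.integrableOn hYY0 <| by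
      filter_upwards [ae_restrict_of_ae hA4, ae_restrict_mem hS0] with ω h hω using (h hω).2
  have hτ : Measurable fun x => (1 - g x) / g x := (measurable_const.sub hg.1).div hg.1
  obtain ⟨hτφ, hii⟩ := integral_div_propensity_eq
    (c := fun x => (1 - g x) / g x * (m0 x / μ10 x)) hX hS01 hS hA01 hA hq hμ11obs hYint
    (hA3.mono fun ω h hω => (h hω).1.ne') (hτ.mul (hm0.1.div hμ10obs.1)) hint2
  obtain ⟨-, hiii⟩ := integral_div_one_sub_propensity_eq
    (c := fun x => μ11 x / μ10 x * (m0 x / μ10 x) * ((1 - g x) / g x))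
    hX hS01 hS hA01 hA hq hμ10obs hYint (hA3.mono fun ω h hω => (h hω).2.ne)
    (((hμ11obs.1.div hμ10obs.1).mul (hm0.1.div hμ10obs.1)).mul hτ) hint3
  have hii' : (fun ω => μ11 (X ω) * ((1 - g (X ω)) / g (X ω) * (m0 (X ω) / μ10 (X ω))))
      = fun ω => (1 - g (X ω)) / g (X ω) * (μ11 (X ω) / μ10 (X ω) * m0 (X ω)) :=
    funext fun _ => by ring
  have hiii' : (fun ω => μ10 (X ω) *
        (μ11 (X ω) / μ10 (X ω) * (m0 (X ω) / μ10 (X ω)) * ((1 - g (X ω)) / g (X ω))))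
      = fun ω => (1 - g (X ω)) / g (X ω) * (μ11 (X ω) / μ10 (X ω) * m0 (X ω)) :=
    funext fun ω => by
      rcases eq_or_ne (μ10 (X ω)) 0 with h | h
      · simp [h]
      · field_simp
  have htail := setIntegral_odds_mul_eq
    (f := fun x => μ11 x / μ10 x * m0 x) hX hS01 hS hg (hA5.mono fun _ h => h.ne')
    ((hμ11obs.1.div hμ10obs.1).mul hm0.1) hint1 (hii' ▸ hτφ)
  refine ⟨by rw [condMean, condMean, hi], ?_, ?_⟩
  · rw [condMean, hi, hii, hii', htail, div_eq_inv_mul]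
  · rw [condMean, hi, hiii, hiii', htail, div_eq_inv_mul]

/-- Alternative identification formulas for Scenario 1 (Supplement B).  Under (A1)–(A6),
with `τ = (1−g)/g`, each of the following equals `E[Y¹ ∣ S = 0]`:
(i) `E[(μ₁₁(X)/μ₁₀(X))·m₀(X) ∣ S = 0]`;
(ii) `P(S=0)⁻¹·E[τ(X)·(m₀(X)/μ₁₀(X))·S·A·Y/q(X)]`;
(iii) `P(S=0)⁻¹·E[(μ₁₁(X)/μ₁₀(X))·(m₀(X)/μ₁₀(X))·τ(X)·S·(1−A)·Y/(1−q(X))]`. -/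
theorem alternative_identification_scenario1
    {Ω E : Type*} [MeasurableSpace Ω] [MeasurableSpace E]
    (P : Measure Ω) [IsProbabilityMeasure P]
    (X : Ω → E) (S A Y Y0 Y1 : Ω → ℝ)
    (hX : Measurable X) (hS : Measurable S) (hA : Measurable A) (hY : Measurable Y)
    (hS01 : ∀ ω, S ω = 0 ∨ S ω = 1) (hA01 : ∀ ω, A ω = 0 ∨ A ω = 1)
    (hPS0 : 0 < P {ω | S ω = 0})
    (hPS1A1 : 0 < P {ω | S ω = 1 ∧ A ω = 1})
    (hPS1A0 : 0 < P {ω | S ω = 1 ∧ A ω = 0})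
    (hYint : Integrable Y P) (hY0int : Integrable Y0 P) (hY1int : Integrable Y1 P)
    (g q μ11 μ10 ρ0 ρ1 m0 : E → ℝ)
    (hg : IsVersion P X S Set.univ g)
    (hg01 : ∀ᵐ ω ∂P, 0 < g (X ω) ∧ g (X ω) < 1)
    (hq : IsVersion P X A {ω | S ω = 1} q)
    -- m₀ is a version of E[Y ∣ X; S = 0]
    (hm0 : IsVersion P X Y {ω | S ω = 0} m0)
    -- (A1)
    (hA1 : ∀ᵐ ω ∂P, Y ω = A ω * Y1 ω + (1 - A ω) * Y0 ω)
    -- (A2)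
    (hμ11obs : IsVersion P X Y {ω | S ω = 1 ∧ A ω = 1} μ11)
    (hμ11cf : IsVersion P X Y1 {ω | S ω = 1} μ11)
    (hμ10obs : IsVersion P X Y {ω | S ω = 1 ∧ A ω = 0} μ10)
    (hμ10cf : IsVersion P X Y0 {ω | S ω = 1} μ10)
    -- (A3)
    (hA3 : ∀ᵐ ω ∂P, S ω = 1 → 0 < q (X ω) ∧ q (X ω) < 1)
    -- (A4)
    (hρ0 : IsVersion P X Y0 {ω | S ω = 0} ρ0)
    (hρ1 : IsVersion P X Y1 {ω | S ω = 0} ρ1)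
    (hA4 : ∀ᵐ ω ∂P, S ω = 0 →
      μ10 (X ω) ≠ 0 ∧ ρ0 (X ω) ≠ 0 ∧
        μ11 (X ω) / μ10 (X ω) = ρ1 (X ω) / ρ0 (X ω))
    -- (A5)
    (hA5 : ∀ᵐ ω ∂P, 0 < g (X ω))
    -- (A6)
    (hA6 : ∀ᵐ ω ∂P, S ω = 0 → A ω = 0)
    -- integrability of the expressions inside the expectations below
    (hint1 : Integrable (fun ω => μ11 (X ω) / μ10 (X ω) * m0 (X ω)) P)
    (hint2 : Integrable (fun ω =>
      (1 - g (X ω)) / g (X ω) * (m0 (X ω) / μ10 (X ω)) * (S ω * A ω * Y ω) / q (X ω)) P)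
    (hint3 : Integrable (fun ω =>
      μ11 (X ω) / μ10 (X ω) * (m0 (X ω) / μ10 (X ω)) * ((1 - g (X ω)) / g (X ω)) *
        (S ω * (1 - A ω) * Y ω) / (1 - q (X ω))) P) :
    condMean P Y1 {ω | S ω = 0}
      = condMean P (fun ω => μ11 (X ω) / μ10 (X ω) * m0 (X ω)) {ω | S ω = 0} ∧
    condMean P Y1 {ω | S ω = 0}
      = (P {ω | S ω = 0}).toReal⁻¹ *
          ∫ ω, (1 - g (X ω)) / g (X ω) * (m0 (X ω) / μ10 (X ω)) *
            (S ω * A ω * Y ω) / q (X ω) ∂P ∧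
    condMean P Y1 {ω | S ω = 0}
      = (P {ω | S ω = 0}).toReal⁻¹ *
          ∫ ω, μ11 (X ω) / μ10 (X ω) * (m0 (X ω) / μ10 (X ω)) *
            ((1 - g (X ω)) / g (X ω)) * (S ω * (1 - A ω) * Y ω) / (1 - q (X ω)) ∂P :=
  alternative_identification_scenario1_general P X S A Y Y0 Y1 hX hS hA hS01 hA01 hYint g q μ11 μ10
    ρ0 ρ1 m0 hg hq hm0 hA1 hμ11obs hμ10obs hA3 hρ0 hρ1 hA4 hA5 hA6 hint1 hint2 hint3
end

section
/- Identification of the control counterfactual mean in Scenario 3 (Theorem S J.1): under conditions (A1), (C1) and (C2), E[Y⁰ | S = 0] = E[ μ′₀₀(X, W) | S = 0 ] = E[ ((1−A)/π′(X, W)) · Y | S = 0 ]. -/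
/-!
Inverse propensity weighting. On `{S = 0, A = 0}`, testing the version `μ′₀₀` against `1/π′`
turns `∫_{S=0} (1 - A) Y / π′` into `∫_{S=0} 1{A=0} μ′₀₀ / π′`; testing the version `π′` of the
propensity against `μ′₀₀ / π′` turns this into `∫_{S=0} μ′₀₀`, which is `∫_{S=0} Y⁰` by the
tower property for the counterfactual version of `μ′₀₀`. As `1/π′` and `μ′₀₀` are unbounded
while versions are only tested against bounded functions, both tests are made with truncations
and passed to the limit by dominated convergence.
-/

open MeasureTheory Filter Topology

def clip (n : ℕ) (x : ℝ) : ℝ := max (min x n) (-n)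

lemma measurable_clip (n : ℕ) : Measurable (clip n) := by
  unfold clip; fun_prop

lemma abs_clip_le (n : ℕ) (x : ℝ) : |clip n x| ≤ n := by
  unfold clip; grind [abs_le]

lemma abs_clip_le_abs (n : ℕ) (x : ℝ) : |clip n x| ≤ |x| := by
  unfold clip; grind [abs_le, abs_nonneg, le_abs_self, neg_abs_le]

lemma tendsto_clip (x : ℝ) : Tendsto (fun n => clip n x) atTop (𝓝 x) := by
  refine tendsto_const_nhds.congr' ?_
  filter_upwards [eventually_ge_atTop ⌈|x|⌉₊] with n hn
  have hx : |x| ≤ n := (Nat.le_ceil _).trans (by exact_mod_cast hn)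
  rw [clip, min_eq_left ((le_abs_self x).trans hx), max_eq_left (by linarith [neg_abs_le x])]

noncomputable def truncInv (n : ℕ) (x : ℝ) : ℝ := (max x (n + 1 : ℝ)⁻¹)⁻¹

lemma measurable_truncInv (n : ℕ) : Measurable (truncInv n) := by
  unfold truncInv; fun_prop

lemma truncInv_nonneg (n : ℕ) (x : ℝ) : 0 ≤ truncInv n x :=
  inv_nonneg.2 ((inv_nonneg.2 (by positivity)).trans (le_max_right _ _))

lemma abs_truncInv_le (n : ℕ) (x : ℝ) : |truncInv n x| ≤ n + 1 := by
  rw [abs_of_nonneg (truncInv_nonneg n x), truncInv]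
  exact (inv_anti₀ (by positivity) (le_max_right _ _)).trans_eq (inv_inv _)

lemma truncInv_le_inv (n : ℕ) {x : ℝ} (hx : 0 < x) : truncInv n x ≤ x⁻¹ :=
  inv_anti₀ hx (le_max_left _ _)

lemma tendsto_truncInv {x : ℝ} (hx : 0 < x) : Tendsto (fun n => truncInv n x) atTop (𝓝 x⁻¹) := by
  refine tendsto_const_nhds.congr' ?_
  filter_upwards [(tendsto_inv_atTop_zero.comp
    (tendsto_natCast_atTop_atTop.atTop_add tendsto_const_nhds)).eventually (gt_mem_nhds hx)]
    with n hn
  rw [truncInv, max_eq_left (by simpa using hn.le)]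

section

variable {Ω G : Type*} [MeasurableSpace Ω] [MeasurableSpace G] {P : Measure Ω}

lemma tendsto_integral_mul_of_abs_le {ν : Measure Ω} {F g : Ω → ℝ} {φ : ℕ → Ω → ℝ}
    (hFg : Integrable (fun ω => F ω * g ω) ν) (hF : AEStronglyMeasurable F ν)
    (hφ : ∀ n, AEStronglyMeasurable (φ n) ν) (hle : ∀ n, ∀ᵐ ω ∂ν, |φ n ω| ≤ |g ω|)
    (hlim : ∀ᵐ ω ∂ν, Tendsto (fun n => φ n ω) atTop (𝓝 (g ω))) :
    Tendsto (fun n => ∫ ω, F ω * φ n ω ∂ν) atTop (𝓝 (∫ ω, F ω * g ω ∂ν)) := by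
  refine tendsto_integral_of_dominated_convergence _ (fun n => hF.mul (hφ n)) hFg.norm
    (fun n => ?_) ?_
  · filter_upwards [hle n] with ω h
    simp only [norm_mul, Real.norm_eq_abs]
    exact mul_le_mul_of_nonneg_left h (abs_nonneg _)
  · filter_upwards [hlim] with ω h
    exact h.const_mul _

lemma IsVersion.setIntegral_eq_s8 {V : Ω → G} {Z : Ω → ℝ} {B : Set Ω} {m : G → ℝ}
    (hv : IsVersion P V Z B m) : ∫ ω in B, Z ω ∂P = ∫ ω in B, m (V ω) ∂P := by
  simpa using hv.2 (fun _ => 1) measurable_const ⟨1, fun _ => by simp⟩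

lemma IsVersion.setIntegral_mul_eq {V : Ω → G} {Z : Ω → ℝ} {B : Set Ω} {m g : G → ℝ}
    (hv : IsVersion P V Z B m) (hV : Measurable V) (hZ : AEStronglyMeasurable Z (P.restrict B))
    (hg : Measurable g) (hZg : Integrable (fun ω => Z ω * g (V ω)) (P.restrict B))
    (hmg : Integrable (fun ω => m (V ω) * g (V ω)) (P.restrict B)) :
    ∫ ω in B, Z ω * g (V ω) ∂P = ∫ ω in B, m (V ω) * g (V ω) ∂P := by
  have hclip : ∀ n : ℕ, ∫ ω in B, Z ω * clip n (g (V ω)) ∂P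
      = ∫ ω in B, m (V ω) * clip n (g (V ω)) ∂P := fun n =>
    hv.2 _ ((measurable_clip n).comp hg) ⟨n, fun _ => abs_clip_le n _⟩
  have hlim := fun {F : Ω → ℝ} (hF : AEStronglyMeasurable F (P.restrict B))
      (hFg : Integrable (fun ω => F ω * g (V ω)) (P.restrict B)) =>
    tendsto_integral_mul_of_abs_le hFg hF
      (fun n => ((measurable_clip n).comp (hg.comp hV)).aestronglyMeasurable)
      (fun n => ae_of_all _ fun ω => abs_clip_le_abs n _) (ae_of_all _ fun ω => tendsto_clip _)
  exact tendsto_nhds_unique ((hlim hZ hZg).congr hclip)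
    (hlim (hv.1.comp hV).aestronglyMeasurable hmg)

lemma setIntegral_inter_mul_eq_setIntegral_mul_propensity {V : Ω → G} {Y : Ω → ℝ}
    {B D : Set Ω} {μ π k : G → ℝ} {C C' : ℝ} (hV : Measurable V) (hD : MeasurableSet D)
    (hμ : IsVersion P V Y (B ∩ D) μ) (hπ : IsVersion P V (D.indicator 1) B π)
    (hμint : Integrable (fun ω => μ (V ω)) (P.restrict B))
    (hk : Measurable k) (hkC : ∀ p, |k p| ≤ C)
    (hπk : ∀ᵐ ω ∂P.restrict B, |π (V ω) * k (V ω)| ≤ C') :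
    ∫ ω in B ∩ D, Y ω * k (V ω) ∂P = ∫ ω in B, μ (V ω) * (π (V ω) * k (V ω)) ∂P := by
  have hind : AEStronglyMeasurable (D.indicator (1 : Ω → ℝ)) (P.restrict B) :=
    (measurable_const.indicator hD).aestronglyMeasurable
  have hμk : Integrable (fun ω => μ (V ω) * k (V ω)) (P.restrict B) :=
    hμint.mul_bdd (hk.comp hV).aestronglyMeasurable (ae_of_all _ fun ω => hkC _)
  calc ∫ ω in B ∩ D, Y ω * k (V ω) ∂P
      = ∫ ω in B ∩ D, μ (V ω) * k (V ω) ∂P := hμ.2 k hk ⟨C, hkC⟩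
    _ = ∫ ω in B, D.indicator 1 ω * (μ (V ω) * k (V ω)) ∂P := by
        rw [← setIntegral_indicator hD]
        congr 1 with ω
        by_cases hω : ω ∈ D <;> simp [hω]
    _ = ∫ ω in B, π (V ω) * (μ (V ω) * k (V ω)) ∂P := by
        refine hπ.setIntegral_mul_eq hV (g := fun p => μ p * k p) hind (hμ.1.mul hk) ?_ ?_
        · refine hμk.bdd_mul (c := 1) hind (ae_of_all _ fun ω => ?_)
          by_cases hω : ω ∈ D <;> simp [hω]
        · refine (hμint.mul_bdd ((hπ.1.mul hk).comp hV).aestronglyMeasurable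
            (by simpa using hπk)).congr (ae_of_all _ fun ω => ?_)
          simp only [Function.comp_apply, Pi.mul_apply]
          ring
    _ = ∫ ω in B, μ (V ω) * (π (V ω) * k (V ω)) ∂P := by
        congr 1 with ω
        ring

theorem setIntegral_inter_div_propensity_eq {V : Ω → G} {Y : Ω → ℝ} {B D : Set Ω}
    {μ π : G → ℝ} (hV : Measurable V) (hD : MeasurableSet D)
    (hY : AEStronglyMeasurable Y (P.restrict (B ∩ D))) (hμ : IsVersion P V Y (B ∩ D) μ)
    (hπ : IsVersion P V (D.indicator 1) B π) (hπpos : ∀ᵐ ω ∂P.restrict B, 0 < π (V ω))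
    (hμint : Integrable (fun ω => μ (V ω)) (P.restrict B))
    (hYπ : Integrable (fun ω => Y ω / π (V ω)) (P.restrict (B ∩ D))) :
    ∫ ω in B ∩ D, Y ω / π (V ω) ∂P = ∫ ω in B, μ (V ω) ∂P := by
  set h : ℕ → G → ℝ := fun n p => truncInv n (π p)
  have hh : ∀ n, Measurable (h n) := fun n => (measurable_truncInv n).comp hπ.1
  have hπh : ∀ n, ∀ᵐ ω ∂P.restrict B, |π (V ω) * h n (V ω)| ≤ |1| := fun n => by
    filter_upwards [hπpos] with ω hω
    rw [abs_one, abs_of_nonneg (mul_nonneg hω.le (truncInv_nonneg _ _))]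
    calc π (V ω) * h n (V ω) ≤ π (V ω) * (π (V ω))⁻¹ :=
          mul_le_mul_of_nonneg_left (truncInv_le_inv n hω) hω.le
      _ = 1 := mul_inv_cancel₀ hω.ne'
  have hπposD : ∀ᵐ ω ∂P.restrict (B ∩ D), 0 < π (V ω) :=
    ae_restrict_of_ae_restrict_of_subset Set.inter_subset_left hπpos
  have lhs : Tendsto (fun n => ∫ ω in B ∩ D, Y ω * h n (V ω) ∂P) atTop
      (𝓝 (∫ ω in B ∩ D, Y ω * (π (V ω))⁻¹ ∂P)) := by
    refine tendsto_integral_mul_of_abs_le (by simpa only [div_eq_mul_inv] using hYπ) hY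
      (fun n => ((hh n).comp hV).aestronglyMeasurable) (fun n => ?_) ?_
    · filter_upwards [hπposD] with ω hω
      rw [abs_of_nonneg (truncInv_nonneg _ _), abs_of_pos (inv_pos.2 hω)]
      exact truncInv_le_inv n hω
    · filter_upwards [hπposD] with ω hω
      exact tendsto_truncInv hω
  have rhs : Tendsto (fun n => ∫ ω in B, μ (V ω) * (π (V ω) * h n (V ω)) ∂P) atTop
      (𝓝 (∫ ω in B, μ (V ω) * 1 ∂P)) := by
    refine tendsto_integral_mul_of_abs_le (by simpa using hμint) hμint.aestronglyMeasurable
      (fun n => ((hπ.1.mul (hh n)).comp hV).aestronglyMeasurable) hπh ?_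
    filter_upwards [hπpos] with ω hω
    simpa [mul_inv_cancel₀ hω.ne'] using (tendsto_truncInv hω).const_mul (π (V ω))
  have key : ∀ n, ∫ ω in B ∩ D, Y ω * h n (V ω) ∂P
      = ∫ ω in B, μ (V ω) * (π (V ω) * h n (V ω)) ∂P := fun n =>
    setIntegral_inter_mul_eq_setIntegral_mul_propensity hV hD hμ hπ hμint (hh n)
      (fun _ => abs_truncInv_le n _) (hπh n)
  calc ∫ ω in B ∩ D, Y ω / π (V ω) ∂P = ∫ ω in B ∩ D, Y ω * (π (V ω))⁻¹ ∂P := by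
        simp only [div_eq_mul_inv]
    _ = ∫ ω in B, μ (V ω) * 1 ∂P := tendsto_nhds_unique (lhs.congr key) rhs
    _ = ∫ ω in B, μ (V ω) ∂P := by simp only [mul_one]

end

theorem control_mean_identification_scenario3_general
    {Ω E F : Type*} [MeasurableSpace Ω] [MeasurableSpace E] [MeasurableSpace F]
    (P : Measure Ω)
    (X : Ω → E) (W : Ω → F) (S A Y Y0 : Ω → ℝ)
    (hX : Measurable X) (hW : Measurable W)
    (hS : Measurable S) (hA : Measurable A) (hY : Measurable Y)
    (hA01 : ∀ ω, A ω = 0 ∨ A ω = 1)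
    (μ00' π' : E × F → ℝ)
    -- (C1, combined with A1)
    (hμ00'obs : IsVersion P (fun ω => (X ω, W ω)) Y {ω | S ω = 0 ∧ A ω = 0} μ00')
    (hμ00'cf : IsVersion P (fun ω => (X ω, W ω)) Y0 {ω | S ω = 0} μ00')
    -- (C2)
    (hπ' : IsVersion P (fun ω => (X ω, W ω)) (fun ω => 1 - A ω) {ω | S ω = 0} π')
    (hπ'01 : ∀ᵐ ω ∂P, S ω = 0 → 0 < π' (X ω, W ω) ∧ π' (X ω, W ω) < 1)
    -- integrability of the expressions inside the identifying expectations
    (hint1 : Integrable (fun ω => μ00' (X ω, W ω)) P)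
    (hint2 : Integrable (fun ω => (1 - A ω) / π' (X ω, W ω) * Y ω) P) :
    condMean P Y0 {ω | S ω = 0}
      = condMean P (fun ω => μ00' (X ω, W ω)) {ω | S ω = 0} ∧
    condMean P Y0 {ω | S ω = 0}
      = condMean P (fun ω => (1 - A ω) / π' (X ω, W ω) * Y ω) {ω | S ω = 0} := by
  set B := {ω | S ω = 0}
  set D := {ω | A ω = 0}
  have hB : MeasurableSet B := hS (measurableSet_singleton 0)
  have hD : MeasurableSet D := hA (measurableSet_singleton 0)
  have hweight : (fun ω => 1 - A ω) = D.indicator 1 := funext fun ω => by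
    rcases hA01 ω with h | h <;> simp [D, h]
  have hipw : (fun ω => (1 - A ω) / π' (X ω, W ω) * Y ω)
      = D.indicator (fun ω => Y ω / π' (X ω, W ω)) := funext fun ω => by
    rcases hA01 ω with h | h <;> simp [D, h, div_eq_mul_inv, mul_comm]
  have htower := hμ00'cf.setIntegral_eq_s8
  have hidentified : ∫ ω in B ∩ D, Y ω / π' (X ω, W ω) ∂P = ∫ ω in B, μ00' (X ω, W ω) ∂P :=
    setIntegral_inter_div_propensity_eq (hX.prodMk hW) hD hY.aestronglyMeasurable hμ00'obs
      (hweight ▸ hπ') ((ae_restrict_iff' hB).2 (hπ'01.mono fun ω h hω => (h hω).1))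
      hint1.restrict ((integrable_indicator_iff hD).1 (hipw ▸ hint2)
        |>.mono_set Set.inter_subset_right)
  refine ⟨by rw [condMean, condMean, htower], ?_⟩
  rw [condMean, condMean, htower, hipw, setIntegral_indicator hD, hidentified]

/-- Theorem S J.1 (Scenario 3): identification of the control counterfactual mean,
under (A1), (C1), (C2):
`E[Y⁰ ∣ S = 0] = E[μ′₀₀(X,W) ∣ S = 0] = E[((1−A)/π′(X,W))·Y ∣ S = 0]`. -/
theorem control_mean_identification_scenario3
    {Ω E F : Type*} [MeasurableSpace Ω] [MeasurableSpace E] [MeasurableSpace F]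
    (P : Measure Ω) [IsProbabilityMeasure P]
    (X : Ω → E) (W : Ω → F) (S A Y Y0 Y1 : Ω → ℝ)
    (hX : Measurable X) (hW : Measurable W)
    (hS : Measurable S) (hA : Measurable A) (hY : Measurable Y)
    (hS01 : ∀ ω, S ω = 0 ∨ S ω = 1) (hA01 : ∀ ω, A ω = 0 ∨ A ω = 1)
    (hPS0 : 0 < P {ω | S ω = 0})
    (hYint : Integrable Y P) (hY0int : Integrable Y0 P) (hY1int : Integrable Y1 P)
    (μ00' π' : E × F → ℝ)
    -- (A1)
    (hA1 : ∀ᵐ ω ∂P, Y ω = A ω * Y1 ω + (1 - A ω) * Y0 ω)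
    -- (C1, combined with A1)
    (hPS0A0 : 0 < P {ω | S ω = 0 ∧ A ω = 0})
    (hμ00'obs : IsVersion P (fun ω => (X ω, W ω)) Y {ω | S ω = 0 ∧ A ω = 0} μ00')
    (hμ00'cf : IsVersion P (fun ω => (X ω, W ω)) Y0 {ω | S ω = 0} μ00')
    -- (C2)
    (hπ' : IsVersion P (fun ω => (X ω, W ω)) (fun ω => 1 - A ω) {ω | S ω = 0} π')
    (hπ'01 : ∀ᵐ ω ∂P, S ω = 0 → 0 < π' (X ω, W ω) ∧ π' (X ω, W ω) < 1)
    -- integrability of the expressions inside the identifying expectations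
    (hint1 : Integrable (fun ω => μ00' (X ω, W ω)) P)
    (hint2 : Integrable (fun ω => (1 - A ω) / π' (X ω, W ω) * Y ω) P) :
    condMean P Y0 {ω | S ω = 0}
      = condMean P (fun ω => μ00' (X ω, W ω)) {ω | S ω = 0} ∧
    condMean P Y0 {ω | S ω = 0}
      = condMean P (fun ω => (1 - A ω) / π' (X ω, W ω) * Y ω) {ω | S ω = 0} :=
  control_mean_identification_scenario3_general P X W S A Y Y0 hX hW hS hA hY hA01 μ00' π' hμ00'obs
    hμ00'cf hπ' hπ'01 hint1 hint2
end

section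
/- Exact second-order expansion of the Scenario 2 estimating functional (from the proof of Theorem 4, Supplement I, with q known): for all admissible nuisance candidates μ̃₁₁, μ̃₁₀, μ̃₀₀, τ̃, π̃, writing r := μ₁₁/μ₁₀ and r̃ := μ̃₁₁/μ̃₁₀, E[ H₂(μ̃₁₁, μ̃₁₀, μ̃₀₀, τ̃, π̃) ] − α₂ = E[ (r̃(X) − r(X)) · ( μ₀₀(X) − (τ̃(X)/τ(X)) · (μ̃₀₀(X)/μ̃₁₀(X)) · μ₁₀(X) ) + r̃(X) · (1 − π(X)/π̃(X)) · (μ̃₀₀(X) − μ₀₀(X)) | S = 0 ]. -/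
open MeasureTheory

/-- Admissible nuisance candidates for Scenario 2 (with propensity candidate `p`). -/
def Admissible2 {Ω E : Type*} [MeasurableSpace Ω] [MeasurableSpace E]
    (P : Measure Ω) (X : Ω → E) (ε M : ℝ) (m11 m10 m00 t p : E → ℝ) : Prop :=
  Measurable m11 ∧ Measurable m10 ∧ Measurable m00 ∧ Measurable t ∧ Measurable p ∧
    (∀ x, ε ≤ p x ∧ p x ≤ 1 - ε) ∧
    ∀ᵐ ω ∂P, ε ≤ |m10 (X ω)| ∧ |m11 (X ω)| ≤ M ∧ |m10 (X ω)| ≤ M ∧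
      |m00 (X ω)| ≤ M ∧ 0 ≤ t (X ω) ∧ t (X ω) ≤ M

/-- The Scenario 2 uncentered estimating function `H₂`, with `κ = 1/P(S=0)`. -/
noncomputable def H2 {Ω E : Type*} [MeasurableSpace Ω]
    (P : Measure Ω) (X : Ω → E) (S A Y : Ω → ℝ) (q m11 m10 m00 t p : E → ℝ) :
    Ω → ℝ := fun ω =>
  (P {ω' | S ω' = 0}).toReal⁻¹ *
    ((1 - S ω) * (m11 (X ω) / m10 (X ω)) *
        (m00 (X ω) + (1 - A ω) / p (X ω) * (Y ω - m00 (X ω))) +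
      S ω * t (X ω) * (m00 (X ω) / m10 (X ω)) *
        (A ω / q (X ω) * (Y ω - m11 (X ω)) -
          (1 - A ω) / (1 - q (X ω)) * (m11 (X ω) / m10 (X ω)) * (Y ω - m10 (X ω))))

/-!
Conditioning on `X` turns every inverse-weighted residual of `H₂` into a difference of
regression functions. In the `S = 0` term the candidate propensity `π̃` is left standing
against the true `π`, giving the factor `π/π̃`; in the `S = 1` correction the known `q`
cancels its own weights, and the odds `g/(1 − g)` of the selection score carry the remaining
`S = 1` average over to the `S = 0` population. After that, `E[H₂] − α₂` is the `S = 0` mean of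
an explicit function of `X`, which is the claimed product form by field arithmetic.
-/

open scoped ENNReal

namespace MeasureTheory.MemLp

variable {α : Type*} [MeasurableSpace α] {μ : Measure α} {f g : α → ℝ}

theorem mul_top (hf : MemLp f ∞ μ) (hg : MemLp g ∞ μ) :
    MemLp (fun x => f x * g x) ∞ μ :=
  hg.mul' hf

theorem div_top (hf : MemLp f ∞ μ) (hg : MemLp (fun x => (g x)⁻¹) ∞ μ) :
    MemLp (fun x => f x / g x) ∞ μ := by
  simpa only [div_eq_mul_inv] using hf.mul_top hg

theorem exists_ae_abs_le_of_top (hf : MemLp f ∞ μ) : ∃ C, ∀ᵐ x ∂μ, |f x| ≤ C := by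
  refine ⟨(eLpNorm f ∞ μ).toReal, ?_⟩
  filter_upwards [ae_le_eLpNormEssSup (f := f) (μ := μ)] with x hx
  rw [← eLpNorm_exponent_top] at hx
  rw [← Real.norm_eq_abs, ← ENNReal.ofReal_le_iff_le_toReal hf.eLpNorm_lt_top.ne, ofReal_norm]
  exact hx

end MeasureTheory.MemLp

section Bounded

variable {α : Type*} [MeasurableSpace α] {μ : Measure α} {f : α → ℝ}

theorem memLp_top_inv_of_le_abs {ε : ℝ} (hf : AEMeasurable f μ) (hε : 0 < ε)
    (hfε : ∀ᵐ x ∂μ, ε ≤ |f x|) : MemLp (fun x => (f x)⁻¹) ∞ μ :=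
  memLp_top_of_bound hf.inv.aestronglyMeasurable ε⁻¹ <| hfε.mono fun x hx => by
    rw [norm_inv, Real.norm_eq_abs]
    exact inv_anti₀ hε hx

theorem memLp_top_of_zero_or_one (hf : Measurable f) (hf01 : ∀ x, f x = 0 ∨ f x = 1) :
    MemLp f ∞ μ :=
  memLp_top_of_bound hf.aestronglyMeasurable 1 <| ae_of_all _ fun x => by
    rcases hf01 x with h | h <;> simp [h]

end Bounded

section Indicator

variable {Ω : Type*} {S : Ω → ℝ}

theorem indicator_setOf_eq_one_of_zero_or_one (hS : ∀ ω, S ω = 0 ∨ S ω = 1) :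
    {ω | S ω = 1}.indicator 1 = S := by
  ext ω
  rcases hS ω with h | h <;> simp [Set.indicator, h]

theorem indicator_setOf_eq_zero_of_zero_or_one (hS : ∀ ω, S ω = 0 ∨ S ω = 1) :
    {ω | S ω = 0}.indicator 1 = fun ω => 1 - S ω := by
  ext ω
  rcases hS ω with h | h <;> simp [Set.indicator, h]

variable [MeasurableSpace Ω] {P : Measure Ω} {χ : Ω → ℝ} {T : Set Ω}

theorem setIntegral_mul_of_indicator_eq (hT : MeasurableSet T) (hχ : T.indicator 1 = χ)
    (B : Set Ω) (f : Ω → ℝ) : ∫ ω in B, χ ω * f ω ∂P = ∫ ω in B ∩ T, f ω ∂P := by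
  have hf : (fun ω => χ ω * f ω) = T.indicator f := by
    ext ω
    by_cases hω : ω ∈ T <;> simp [← hχ, hω]
  rw [hf, setIntegral_indicator hT]

theorem integral_mul_of_indicator_eq (hT : MeasurableSet T) (hχ : T.indicator 1 = χ)
    (f : Ω → ℝ) : ∫ ω, χ ω * f ω ∂P = ∫ ω in T, f ω ∂P := by
  simpa using setIntegral_mul_of_indicator_eq (P := P) hT hχ Set.univ f

end Indicator

namespace IsVersion

variable {Ω E : Type*} [MeasurableSpace Ω] [MeasurableSpace E] {P : Measure Ω} {X : Ω → E}
  {Z : Ω → ℝ} {B : Set Ω} {m : E → ℝ}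

theorem setIntegral_mul (hv : IsVersion P X Z B m) {h : E → ℝ} (hh : Measurable h)
    (hhX : MemLp (fun ω => h (X ω)) ∞ (P.restrict B)) :
    ∫ ω in B, Z ω * h (X ω) ∂P = ∫ ω in B, m (X ω) * h (X ω) ∂P := by
  obtain ⟨C, hC⟩ := hhX.exists_ae_abs_le_of_top
  -- `h` clipped to `[-C, C]` is an admissible test function and agrees with `h` along `X`
  set hc : E → ℝ := fun x => max (-C) (min C (h x))
  have hc_bdd : ∀ x, |hc x| ≤ |C| := fun x =>
    abs_le.2 ⟨(neg_le_neg (le_abs_self C)).trans (le_max_left _ _),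
      max_le (neg_le_abs C) ((min_le_left _ _).trans (le_abs_self C))⟩
  have hc_eq : ∀ᵐ ω ∂P.restrict B, hc (X ω) = h (X ω) := hC.mono fun ω hω => by
    obtain ⟨hlo, hhi⟩ := abs_le.1 hω
    simp only [hc, min_eq_right hhi, max_eq_right hlo]
  calc ∫ ω in B, Z ω * h (X ω) ∂P = ∫ ω in B, Z ω * hc (X ω) ∂P :=
        integral_congr_ae (hc_eq.mono fun ω hω => by simp only [hω])
    _ = ∫ ω in B, m (X ω) * hc (X ω) ∂P :=
        hv.2 hc (measurable_const.max (measurable_const.min hh)) ⟨|C|, hc_bdd⟩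
    _ = ∫ ω in B, m (X ω) * h (X ω) ∂P :=
        integral_congr_ae (hc_eq.mono fun ω hω => by simp only [hω])

theorem setIntegral_inter {χ : Ω → ℝ} (hv : IsVersion P X χ B m) {C : Set Ω}
    (hC : MeasurableSet C) (hχ : C.indicator 1 = χ) {f : E → ℝ} (hf : Measurable f)
    (hfX : MemLp (fun ω => f (X ω)) ∞ (P.restrict B)) :
    ∫ ω in B ∩ C, f (X ω) ∂P = ∫ ω in B, m (X ω) * f (X ω) ∂P := by
  rw [← setIntegral_mul_of_indicator_eq hC hχ, hv.setIntegral_mul hf hfX]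

variable [IsFiniteMeasure P]

theorem setIntegral_mul_sub (hv : IsVersion P X Z B m) (hZ : MemLp Z ∞ P)
    {h n : E → ℝ} (hh : Measurable h) (hhX : MemLp (fun ω => h (X ω)) ∞ P)
    (hnX : MemLp (fun ω => n (X ω)) ∞ P) (hmX : MemLp (fun ω => m (X ω)) ∞ P) :
    ∫ ω in B, h (X ω) * (Z ω - n (X ω)) ∂P = ∫ ω in B, h (X ω) * (m (X ω) - n (X ω)) ∂P := by
  have hint : ∀ {F : Ω → ℝ}, MemLp F ∞ P → Integrable F (P.restrict B) :=
    fun hF => (hF.integrable le_top).restrict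
  simp_rw [mul_sub]
  rw [integral_sub (hint (hhX.mul_top hZ)) (hint (hhX.mul_top hnX)),
    integral_sub (hint (hhX.mul_top hmX)) (hint (hhX.mul_top hnX))]
  simp_rw [mul_comm (h (X _))]
  rw [hv.setIntegral_mul hh (hhX.restrict B)]

theorem one_sub (hv : IsVersion P X Z B m) (hX : Measurable X)
    (hZ : Integrable Z (P.restrict B)) (hm : Integrable (fun ω => m (X ω)) (P.restrict B)) :
    IsVersion P X (fun ω => 1 - Z ω) B (fun x => 1 - m x) := by
  refine ⟨measurable_const.sub hv.1, fun h hh ⟨C, hC⟩ => ?_⟩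
  have hhX : MemLp (fun ω => h (X ω)) ∞ (P.restrict B) :=
    memLp_top_of_bound (hh.comp hX).aestronglyMeasurable C (ae_of_all _ fun ω => hC (X ω))
  have hZh : Integrable (fun ω => Z ω * h (X ω)) (P.restrict B) := hZ.mul_of_top_left hhX
  have hmh : Integrable (fun ω => m (X ω) * h (X ω)) (P.restrict B) := hm.mul_of_top_left hhX
  simp_rw [sub_mul, one_mul]
  rw [integral_sub (hhX.integrable le_top) hZh, integral_sub (hhX.integrable le_top) hmh,
    hv.2 h hh ⟨C, hC⟩]

theorem integral_indicator_mul_residual {B C : Set Ω} (hB : MeasurableSet B)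
    (hC : MeasurableSet C) {χB χC Y : Ω → ℝ} (hχB : B.indicator 1 = χB)
    (hχC : C.indicator 1 = χC) {μ e h n : E → ℝ} (hμ : IsVersion P X Y (B ∩ C) μ)
    (he : IsVersion P X χC B e) (hh : Measurable h) (hn : Measurable n) (hY : MemLp Y ∞ P)
    (hhX : MemLp (fun ω => h (X ω)) ∞ P) (hnX : MemLp (fun ω => n (X ω)) ∞ P)
    (hμX : MemLp (fun ω => μ (X ω)) ∞ P) :
    ∫ ω, χB ω * (χC ω * (h (X ω) * (Y ω - n (X ω)))) ∂P
      = ∫ ω in B, e (X ω) * (h (X ω) * (μ (X ω) - n (X ω))) ∂P := by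
  rw [integral_mul_of_indicator_eq hB hχB, setIntegral_mul_of_indicator_eq hC hχC,
    hμ.setIntegral_mul_sub hY hh hhX hnX hμX,
    he.setIntegral_inter hC hχC (f := fun x => h x * (μ x - n x)) (hh.mul (hμ.1.sub hn))
      ((hhX.mul_top (hμX.sub hnX)).restrict B)]

theorem setIntegral_eq_setIntegral_odds_mul (hX : Measurable X) {χ : Ω → ℝ} {g : E → ℝ}
    (hg : IsVersion P X χ Set.univ g) {C₀ C₁ : Set Ω} (hC₀ : MeasurableSet C₀)
    (hC₁ : MeasurableSet C₁) (hχ₀ : C₀.indicator 1 = fun ω => 1 - χ ω)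
    (hχ₁ : C₁.indicator 1 = χ) (hg1 : ∀ᵐ ω ∂P, 1 - g (X ω) ≠ 0)
    (hgX : MemLp (fun ω => g (X ω)) ∞ P)
    (hoX : MemLp (fun ω => g (X ω) / (1 - g (X ω))) ∞ P) {f : E → ℝ} (hf : Measurable f)
    (hfX : MemLp (fun ω => f (X ω)) ∞ P) :
    ∫ ω in C₁, f (X ω) ∂P = ∫ ω in C₀, g (X ω) / (1 - g (X ω)) * f (X ω) ∂P := by
  -- both sides equal `∫ g(X) f(X)`, by the version property of `g` and of `1 - g`
  have hχ : Integrable χ (P.restrict Set.univ) := by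
    subst hχ₁
    exact ((integrable_const (1 : ℝ)).indicator hC₁).restrict
  have hg' := hg.one_sub hX hχ (hgX.integrable le_top).restrict
  have h₁ := hg.setIntegral_inter hC₁ hχ₁ hf (hfX.restrict _)
  have h₀ := hg'.setIntegral_inter hC₀ hχ₀ (f := fun x => g x / (1 - g x) * f x)
    ((hg.1.div (measurable_const.sub hg.1)).mul hf)
    ((hoX.mul_top hfX).restrict _)
  rw [Set.univ_inter, Measure.restrict_univ] at h₀ h₁
  rw [h₀, h₁]
  refine integral_congr_ae (hg1.mono fun ω hω => ?_)
  field_simp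

end IsVersion

section Scenario2

variable {Ω E : Type*} [MeasurableSpace Ω] [MeasurableSpace E] {P : Measure Ω}
  [IsFiniteMeasure P] {X : Ω → E} {S A Y : Ω → ℝ}

theorem integral_augmented_outcome_term (hS : Measurable S) (hA : Measurable A)
    (hS01 : ∀ ω, S ω = 0 ∨ S ω = 1) (hA01 : ∀ ω, A ω = 0 ∨ A ω = 1) {μ00 π ρ m00 p : E → ℝ}
    (hμ00 : IsVersion P X Y {ω | S ω = 0 ∧ A ω = 0} μ00)
    (hπ : IsVersion P X (fun ω => 1 - A ω) {ω | S ω = 0} π)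
    (hρ : Measurable ρ) (hm00 : Measurable m00) (hp : Measurable p) (hY : MemLp Y ∞ P)
    (hρX : MemLp (fun ω => ρ (X ω)) ∞ P) (hm00X : MemLp (fun ω => m00 (X ω)) ∞ P)
    (hpX : MemLp (fun ω => (p (X ω))⁻¹) ∞ P) (hμ00X : MemLp (fun ω => μ00 (X ω)) ∞ P)
    (hπX : MemLp (fun ω => π (X ω)) ∞ (P.restrict {ω | S ω = 0})) :
    ∫ ω, (1 - S ω) * (ρ (X ω) * (m00 (X ω) + (1 - A ω) / p (X ω) * (Y ω - m00 (X ω)))) ∂P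
      = ∫ ω in {ω | S ω = 0}, (ρ (X ω) * m00 (X ω) +
          π (X ω) * (ρ (X ω) / p (X ω) * (μ00 (X ω) - m00 (X ω)))) ∂P := by
  have hS0 : MeasurableSet {ω | S ω = 0} := hS (measurableSet_singleton 0)
  have hA0 : MeasurableSet {ω | A ω = 0} := hA (measurableSet_singleton 0)
  have h1S : MemLp (fun ω => 1 - S ω) ∞ P :=
    (memLp_top_const 1).sub (memLp_top_of_zero_or_one hS hS01)
  have h1A : MemLp (fun ω => 1 - A ω) ∞ P :=
    (memLp_top_const 1).sub (memLp_top_of_zero_or_one hA hA01)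
  have hw : MemLp (fun ω => ρ (X ω) / p (X ω)) ∞ P := hρX.div_top hpX
  have hsplit : ∀ ω,
      (1 - S ω) * (ρ (X ω) * (m00 (X ω) + (1 - A ω) / p (X ω) * (Y ω - m00 (X ω))))
      = (1 - S ω) * (ρ (X ω) * m00 (X ω)) +
        (1 - S ω) * ((1 - A ω) * (ρ (X ω) / p (X ω) * (Y ω - m00 (X ω)))) := fun ω => by ring
  simp_rw [hsplit]
  rw [integral_add ?_ ?_,
    integral_mul_of_indicator_eq hS0 (indicator_setOf_eq_zero_of_zero_or_one hS01),
    IsVersion.integral_indicator_mul_residual hS0 hA0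
      (indicator_setOf_eq_zero_of_zero_or_one hS01) (indicator_setOf_eq_zero_of_zero_or_one hA01)
      hμ00 hπ (h := fun x => ρ x / p x) (hρ.div hp) hm00 hY hw hm00X hμ00X,
    integral_add ?_ ?_]
  · exact ((hρX.mul_top hm00X).integrable le_top).restrict
  · exact (hπX.mul_top ((hw.mul_top (hμ00X.sub hm00X)).restrict _)).integrable le_top
  · exact (h1S.mul_top (hρX.mul_top hm00X)).integrable le_top
  · exact (h1S.mul_top (h1A.mul_top (hw.mul_top (hY.sub hm00X)))).integrable le_top

theorem integral_bias_correction_term (hX : Measurable X) (hS : Measurable S)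
    (hA : Measurable A) (hS01 : ∀ ω, S ω = 0 ∨ S ω = 1) (hA01 : ∀ ω, A ω = 0 ∨ A ω = 1)
    {μ11 μ10 g q w ρ m11 m10 : E → ℝ} (hμ11 : IsVersion P X Y {ω | S ω = 1 ∧ A ω = 1} μ11)
    (hμ10 : IsVersion P X Y {ω | S ω = 1 ∧ A ω = 0} μ10) (hg : IsVersion P X S Set.univ g)
    (hq : IsVersion P X A {ω | S ω = 1} q) (hw : Measurable w) (hρ : Measurable ρ)
    (hm11 : Measurable m11) (hm10 : Measurable m10)
    (hq01 : ∀ᵐ ω ∂P, q (X ω) ≠ 0 ∧ 1 - q (X ω) ≠ 0) (hg1 : ∀ᵐ ω ∂P, 1 - g (X ω) ≠ 0)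
    (hY : MemLp Y ∞ P) (hwX : MemLp (fun ω => w (X ω)) ∞ P)
    (hρX : MemLp (fun ω => ρ (X ω)) ∞ P) (hm11X : MemLp (fun ω => m11 (X ω)) ∞ P)
    (hm10X : MemLp (fun ω => m10 (X ω)) ∞ P) (hμ11X : MemLp (fun ω => μ11 (X ω)) ∞ P)
    (hμ10X : MemLp (fun ω => μ10 (X ω)) ∞ P) (hqX : MemLp (fun ω => q (X ω)) ∞ P)
    (hqX₁ : MemLp (fun ω => (q (X ω))⁻¹) ∞ P) (hqX₀ : MemLp (fun ω => (1 - q (X ω))⁻¹) ∞ P)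
    (hgX : MemLp (fun ω => g (X ω)) ∞ P)
    (hoX : MemLp (fun ω => g (X ω) / (1 - g (X ω))) ∞ P) :
    ∫ ω, S ω * (w (X ω) * (A ω / q (X ω) * (Y ω - m11 (X ω)) -
        (1 - A ω) / (1 - q (X ω)) * ρ (X ω) * (Y ω - m10 (X ω)))) ∂P
      = ∫ ω in {ω | S ω = 0}, g (X ω) / (1 - g (X ω)) *
          (w (X ω) * (μ11 (X ω) - m11 (X ω) - ρ (X ω) * (μ10 (X ω) - m10 (X ω)))) ∂P := by
  have hS0 : MeasurableSet {ω | S ω = 0} := hS (measurableSet_singleton 0)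
  have hS1 : MeasurableSet {ω | S ω = 1} := hS (measurableSet_singleton 1)
  have hA0 : MeasurableSet {ω | A ω = 0} := hA (measurableSet_singleton 0)
  have hA1 : MeasurableSet {ω | A ω = 1} := hA (measurableSet_singleton 1)
  have hSX : MemLp S ∞ P := memLp_top_of_zero_or_one hS hS01
  have hAX : MemLp A ∞ P := memLp_top_of_zero_or_one hA hA01
  have h1A : MemLp (fun ω => 1 - A ω) ∞ P := (memLp_top_const 1).sub hAX
  have hb₁ : MemLp (fun ω => w (X ω) / q (X ω)) ∞ P := hwX.div_top hqX₁
  have hb₀ : MemLp (fun ω => w (X ω) * ρ (X ω) / (1 - q (X ω))) ∞ P :=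
    (hwX.mul_top hρX).div_top hqX₀
  have hq' : IsVersion P X (fun ω => 1 - A ω) {ω | S ω = 1} (fun x => 1 - q x) :=
    hq.one_sub hX (hAX.integrable le_top).restrict (hqX.integrable le_top).restrict
  have hsplit : ∀ ω, S ω * (w (X ω) * (A ω / q (X ω) * (Y ω - m11 (X ω)) -
        (1 - A ω) / (1 - q (X ω)) * ρ (X ω) * (Y ω - m10 (X ω))))
      = S ω * (A ω * (w (X ω) / q (X ω) * (Y ω - m11 (X ω)))) -
        S ω * ((1 - A ω) * (w (X ω) * ρ (X ω) / (1 - q (X ω)) * (Y ω - m10 (X ω)))) :=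
    fun ω => by ring
  have hcancel : ∀ᵐ ω ∂P.restrict {ω | S ω = 1},
      q (X ω) * (w (X ω) / q (X ω) * (μ11 (X ω) - m11 (X ω))) -
        (1 - q (X ω)) * (w (X ω) * ρ (X ω) / (1 - q (X ω)) * (μ10 (X ω) - m10 (X ω)))
      = w (X ω) * (μ11 (X ω) - m11 (X ω) - ρ (X ω) * (μ10 (X ω) - m10 (X ω))) :=
    ae_restrict_of_ae <| hq01.mono fun ω ⟨hq0, hq1⟩ => by field_simp
  simp_rw [hsplit]
  rw [integral_sub ?_ ?_,
    IsVersion.integral_indicator_mul_residual hS1 hA1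
      (indicator_setOf_eq_one_of_zero_or_one hS01) (indicator_setOf_eq_one_of_zero_or_one hA01)
      hμ11 hq (h := fun x => w x / q x) (hw.div hq.1) hm11 hY hb₁ hm11X hμ11X,
    IsVersion.integral_indicator_mul_residual hS1 hA0
      (indicator_setOf_eq_one_of_zero_or_one hS01) (indicator_setOf_eq_zero_of_zero_or_one hA01)
      hμ10 hq' (h := fun x => w x * ρ x / (1 - q x))
      ((hw.mul hρ).div (measurable_const.sub hq.1)) hm10 hY hb₀ hm10X hμ10X,
    ← integral_sub ?_ ?_, integral_congr_ae hcancel]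
  · exact IsVersion.setIntegral_eq_setIntegral_odds_mul hX hg hS0 hS1
      (indicator_setOf_eq_zero_of_zero_or_one hS01) (indicator_setOf_eq_one_of_zero_or_one hS01)
      hg1 hgX hoX (f := fun x => w x * (μ11 x - m11 x - ρ x * (μ10 x - m10 x)))
      (hw.mul ((hμ11.1.sub hm11).sub (hρ.mul (hμ10.1.sub hm10))))
      (hwX.mul_top ((hμ11X.sub hm11X).sub (hρX.mul_top (hμ10X.sub hm10X))))
  · exact ((hqX.mul_top (hb₁.mul_top (hμ11X.sub hm11X))).integrable le_top).restrict
  · exact ((((memLp_top_const 1).sub hqX).mul_top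
      (hb₀.mul_top (hμ10X.sub hm10X))).integrable le_top).restrict
  · exact (hSX.mul_top (hAX.mul_top (hb₁.mul_top (hY.sub hm11X)))).integrable le_top
  · exact (hSX.mul_top (h1A.mul_top (hb₀.mul_top (hY.sub hm10X)))).integrable le_top

theorem integral_H2_sub_condMean (hX : Measurable X) (hS : Measurable S) (hA : Measurable A)
    (hS01 : ∀ ω, S ω = 0 ∨ S ω = 1) (hA01 : ∀ ω, A ω = 0 ∨ A ω = 1)
    {μ11 μ10 μ00 π g q m11 m10 m00 t p : E → ℝ}
    (hμ11 : IsVersion P X Y {ω | S ω = 1 ∧ A ω = 1} μ11)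
    (hμ10 : IsVersion P X Y {ω | S ω = 1 ∧ A ω = 0} μ10)
    (hμ00 : IsVersion P X Y {ω | S ω = 0 ∧ A ω = 0} μ00)
    (hπ : IsVersion P X (fun ω => 1 - A ω) {ω | S ω = 0} π) (hg : IsVersion P X S Set.univ g)
    (hq : IsVersion P X A {ω | S ω = 1} q) (hm11 : Measurable m11) (hm10 : Measurable m10)
    (hm00 : Measurable m00) (ht : Measurable t) (hp : Measurable p)
    (hq01 : ∀ᵐ ω ∂P, q (X ω) ≠ 0 ∧ 1 - q (X ω) ≠ 0) (hg1 : ∀ᵐ ω ∂P, 1 - g (X ω) ≠ 0)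
    (hY : MemLp Y ∞ P) (hm11X : MemLp (fun ω => m11 (X ω)) ∞ P)
    (hm10X : MemLp (fun ω => m10 (X ω)) ∞ P) (hm10X₁ : MemLp (fun ω => (m10 (X ω))⁻¹) ∞ P)
    (hm00X : MemLp (fun ω => m00 (X ω)) ∞ P) (htX : MemLp (fun ω => t (X ω)) ∞ P)
    (hpX₁ : MemLp (fun ω => (p (X ω))⁻¹) ∞ P) (hμ11X : MemLp (fun ω => μ11 (X ω)) ∞ P)
    (hμ10X : MemLp (fun ω => μ10 (X ω)) ∞ P) (hμ10X₁ : MemLp (fun ω => (μ10 (X ω))⁻¹) ∞ P)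
    (hμ00X : MemLp (fun ω => μ00 (X ω)) ∞ P) (hqX : MemLp (fun ω => q (X ω)) ∞ P)
    (hqX₁ : MemLp (fun ω => (q (X ω))⁻¹) ∞ P) (hqX₀ : MemLp (fun ω => (1 - q (X ω))⁻¹) ∞ P)
    (hgX : MemLp (fun ω => g (X ω)) ∞ P)
    (hoX : MemLp (fun ω => g (X ω) / (1 - g (X ω))) ∞ P)
    (hπX : MemLp (fun ω => π (X ω)) ∞ (P.restrict {ω | S ω = 0})) :
    ∫ ω, H2 P X S A Y q m11 m10 m00 t p ω ∂P -
        condMean P (fun ω => μ11 (X ω) / μ10 (X ω) * μ00 (X ω)) {ω | S ω = 0}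
      = condMean P (fun ω => m11 (X ω) / m10 (X ω) * m00 (X ω) +
          π (X ω) * (m11 (X ω) / m10 (X ω) / p (X ω) * (μ00 (X ω) - m00 (X ω))) +
          g (X ω) / (1 - g (X ω)) * (t (X ω) * (m00 (X ω) / m10 (X ω)) *
            (μ11 (X ω) - m11 (X ω) - m11 (X ω) / m10 (X ω) * (μ10 (X ω) - m10 (X ω)))) -
          μ11 (X ω) / μ10 (X ω) * μ00 (X ω)) {ω | S ω = 0} := by
  have hρX := hm11X.div_top hm10X₁
  have hwX := htX.mul_top (hm00X.div_top hm10X₁)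
  have hSX : MemLp S ∞ P := memLp_top_of_zero_or_one hS hS01
  have h1S : MemLp (fun ω => 1 - S ω) ∞ P := (memLp_top_const 1).sub hSX
  have hAX : MemLp A ∞ P := memLp_top_of_zero_or_one hA hA01
  have h1A : MemLp (fun ω => 1 - A ω) ∞ P := (memLp_top_const 1).sub hAX
  have hG0 : MemLp (fun ω => m11 (X ω) / m10 (X ω) * m00 (X ω) +
      π (X ω) * (m11 (X ω) / m10 (X ω) / p (X ω) * (μ00 (X ω) - m00 (X ω))))
      ∞ (P.restrict {ω | S ω = 0}) :=
    ((hρX.mul_top hm00X).restrict _).add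
      (hπX.mul_top (((hρX.div_top hpX₁).mul_top (hμ00X.sub hm00X)).restrict _))
  have hG1 := ((hoX.mul_top (hwX.mul_top ((hμ11X.sub hm11X).sub
    (hρX.mul_top (hμ10X.sub hm10X))))).restrict {ω | S ω = 0})
  have hsplit : ∀ ω, H2 P X S A Y q m11 m10 m00 t p ω = (P {ω | S ω = 0}).toReal⁻¹ *
      ((1 - S ω) * (m11 (X ω) / m10 (X ω) *
          (m00 (X ω) + (1 - A ω) / p (X ω) * (Y ω - m00 (X ω)))) +
        S ω * (t (X ω) * (m00 (X ω) / m10 (X ω)) * (A ω / q (X ω) * (Y ω - m11 (X ω)) -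
          (1 - A ω) / (1 - q (X ω)) * (m11 (X ω) / m10 (X ω)) * (Y ω - m10 (X ω))))) :=
    fun ω => by simp only [H2]; ring
  simp only [condMean]
  simp_rw [hsplit]
  rw [integral_const_mul, integral_add ?_ ?_,
    integral_augmented_outcome_term hS hA hS01 hA01 hμ00 hπ (ρ := fun x => m11 x / m10 x)
      (hm11.div hm10) hm00 hp hY hρX hm00X hpX₁ hμ00X hπX,
    integral_bias_correction_term hX hS hA hS01 hA01 hμ11 hμ10 hg hq
      (w := fun x => t x * (m00 x / m10 x)) (ρ := fun x => m11 x / m10 x)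
      (ht.mul (hm00.div hm10)) (hm11.div hm10) hm11 hm10 hq01 hg1 hY hwX hρX hm11X hm10X
      hμ11X hμ10X hqX hqX₁ hqX₀ hgX hoX,
    ← integral_add ?_ ?_, integral_sub ?_ ?_]
  · ring
  · exact (hG0.add hG1).integrable le_top
  · exact ((hμ11X.div_top hμ10X₁).mul_top hμ00X).restrict _ |>.integrable le_top
  · exact hG0.integrable le_top
  · exact hG1.integrable le_top
  · exact (h1S.mul_top (hρX.mul_top (hm00X.add ((h1A.div_top hpX₁).mul_top
      (hY.sub hm00X))))).integrable le_top
  · exact (hSX.mul_top (hwX.mul_top (((hAX.div_top hqX₁).mul_top (hY.sub hm11X)).sub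
      (((h1A.div_top hqX₀).mul_top hρX).mul_top (hY.sub hm10X))))).integrable le_top

end Scenario2

theorem scenario2_remainder_identity {μ11 μ10 μ00 π g m11 m10 m00 t p : ℝ} (hμ10 : μ10 ≠ 0)
    (hm10 : m10 ≠ 0) :
    m11 / m10 * m00 + π * (m11 / m10 / p * (μ00 - m00)) +
        g / (1 - g) * (t * (m00 / m10) * (μ11 - m11 - m11 / m10 * (μ10 - m10))) -
        μ11 / μ10 * μ00
      = (m11 / m10 - μ11 / μ10) * (μ00 - t / ((1 - g) / g) * (m00 / m10) * μ10) +
        m11 / m10 * (1 - π / p) * (m00 - μ00) := by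
  field_simp
  ring

theorem H2_second_order_expansion_general
    {Ω E : Type*} [MeasurableSpace Ω] [MeasurableSpace E]
    (P : Measure Ω) [IsProbabilityMeasure P]
    (X : Ω → E) (S A Y : Ω → ℝ)
    (hX : Measurable X) (hS : Measurable S) (hA : Measurable A) (hY : Measurable Y)
    (hS01 : ∀ ω, S ω = 0 ∨ S ω = 1) (hA01 : ∀ ω, A ω = 0 ∨ A ω = 1)
    (μ11 μ10 μ00 π g q : E → ℝ)
    (hμ11 : IsVersion P X Y {ω | S ω = 1 ∧ A ω = 1} μ11)
    (hμ10 : IsVersion P X Y {ω | S ω = 1 ∧ A ω = 0} μ10)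
    (hμ00 : IsVersion P X Y {ω | S ω = 0 ∧ A ω = 0} μ00)
    (hπ : IsVersion P X (fun ω => 1 - A ω) {ω | S ω = 0} π)
    (hg : IsVersion P X S Set.univ g)
    (hq : IsVersion P X A {ω | S ω = 1} q)
    (ε M : ℝ) (hε0 : 0 < ε)
    (hbd : ∀ᵐ ω ∂P,
      ε ≤ g (X ω) ∧ g (X ω) ≤ 1 - ε ∧ ε ≤ q (X ω) ∧ q (X ω) ≤ 1 - ε ∧
      ε ≤ |μ10 (X ω)| ∧ |μ11 (X ω)| ≤ M ∧ |μ10 (X ω)| ≤ M ∧ |μ00 (X ω)| ≤ M ∧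
      |Y ω| ≤ M ∧ (1 - g (X ω)) / g (X ω) ≤ M)
    (hπbd : ∀ᵐ ω ∂P, S ω = 0 → ε ≤ π (X ω) ∧ π (X ω) ≤ 1 - ε) :
    ∀ m11 m10 m00 t p : E → ℝ, Admissible2 P X ε M m11 m10 m00 t p →
      (∫ ω, H2 P X S A Y q m11 m10 m00 t p ω ∂P) -
          condMean P (fun ω => μ11 (X ω) / μ10 (X ω) * μ00 (X ω)) {ω | S ω = 0}
        = condMean P (fun ω =>
            (m11 (X ω) / m10 (X ω) - μ11 (X ω) / μ10 (X ω)) *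
              (μ00 (X ω) -
                t (X ω) / ((1 - g (X ω)) / g (X ω)) *
                  (m00 (X ω) / m10 (X ω)) * μ10 (X ω)) +
            m11 (X ω) / m10 (X ω) * (1 - π (X ω) / p (X ω)) *
              (m00 (X ω) - μ00 (X ω))) {ω | S ω = 0} := by
  intro m11 m10 m00 t p ⟨hm11, hm10, hm00, ht, hp, hpε, hcand⟩
  simp only [Filter.eventually_and] at hbd hcand
  obtain ⟨hg0, hg1, hq0, hq1, hμ10ε, hμ11M, hμ10M, hμ00M, hYM, -⟩ := hbd
  obtain ⟨hm10ε, hm11M, hm10M, hm00M, ht0, htM⟩ := hcand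
  have bdd : ∀ {f : E → ℝ} {C : ℝ}, Measurable f → (∀ᵐ ω ∂P, |f (X ω)| ≤ C) →
      MemLp (fun ω => f (X ω)) ∞ P :=
    fun hf => memLp_top_of_bound (hf.comp hX).aestronglyMeasurable _
  have inv : ∀ {f : E → ℝ}, Measurable f → (∀ᵐ ω ∂P, ε ≤ |f (X ω)|) →
      MemLp (fun ω => (f (X ω))⁻¹) ∞ P :=
    fun hf => memLp_top_inv_of_le_abs (hf.comp hX).aemeasurable hε0
  have h1qε : ∀ᵐ ω ∂P, ε ≤ |1 - q (X ω)| := hq1.mono fun ω h => by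
    rw [abs_of_pos (by linarith)]; linarith
  have h1gε : ∀ᵐ ω ∂P, ε ≤ |1 - g (X ω)| := hg1.mono fun ω h => by
    rw [abs_of_pos (by linarith)]; linarith
  have hgX : MemLp (fun ω => g (X ω)) ∞ P :=
    memLp_of_bounded (hg0.and hg1) (hg.1.comp hX).aestronglyMeasurable ∞
  rw [integral_H2_sub_condMean hX hS hA hS01 hA01 hμ11 hμ10 hμ00 hπ hg hq hm11 hm10 hm00 ht hp
    ((hq0.and h1qε).mono fun ω h => ⟨(hε0.trans_le h.1).ne', abs_pos.1 (hε0.trans_le h.2)⟩)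
    (h1gε.mono fun ω h => abs_pos.1 (hε0.trans_le h))
    (memLp_top_of_bound hY.aestronglyMeasurable M hYM) (bdd hm11 hm11M) (bdd hm10 hm10M)
    (inv hm10 hm10ε) (bdd hm00 hm00M)
    (memLp_of_bounded (ht0.and htM) (ht.comp hX).aestronglyMeasurable ∞)
    (inv hp (ae_of_all _ fun ω => (hpε _).1.trans (le_abs_self _)))
    (bdd hμ11.1 hμ11M) (bdd hμ10.1 hμ10M) (inv hμ10.1 hμ10ε) (bdd hμ00.1 hμ00M)
    (memLp_of_bounded (hq0.and hq1) (hq.1.comp hX).aestronglyMeasurable ∞)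
    (inv hq.1 (hq0.mono fun ω h => h.trans (le_abs_self _)))
    (inv (f := fun x => 1 - q x) (measurable_const.sub hq.1) h1qε) hgX
    (hgX.div_top (inv (f := fun x => 1 - g x) (measurable_const.sub hg.1) h1gε))
    (memLp_of_bounded ((ae_restrict_iff' (hS (measurableSet_singleton 0))).2
      (hπbd.mono fun ω h hω => h hω)) (hπ.1.comp hX).aestronglyMeasurable ∞)]
  simp only [condMean]
  congr 1
  refine integral_congr_ae (ae_restrict_of_ae ?_)
  filter_upwards [hμ10ε, hm10ε] with ω h1 h2
  exact scenario2_remainder_identity (abs_pos.1 (hε0.trans_le h1)) (abs_pos.1 (hε0.trans_le h2))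

/-- Exact second-order expansion of the Scenario 2 estimating functional
(proof of Theorem 4, Supplement I, with `q` known): for all admissible nuisance
candidates, writing `r = μ₁₁/μ₁₀` and `r̃ = μ̃₁₁/μ̃₁₀` and `τ = (1−g)/g`,
`E[H₂(μ̃₁₁,μ̃₁₀,μ̃₀₀,τ̃,π̃)] − α₂
  = E[(r̃(X)−r(X))·(μ₀₀(X) − (τ̃(X)/τ(X))·(μ̃₀₀(X)/μ̃₁₀(X))·μ₁₀(X))
      + r̃(X)·(1 − π(X)/π̃(X))·(μ̃₀₀(X) − μ₀₀(X)) ∣ S = 0]`. -/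
theorem H2_second_order_expansion
    {Ω E : Type*} [MeasurableSpace Ω] [MeasurableSpace E]
    (P : Measure Ω) [IsProbabilityMeasure P]
    (X : Ω → E) (S A Y : Ω → ℝ)
    (hX : Measurable X) (hS : Measurable S) (hA : Measurable A) (hY : Measurable Y)
    (hS01 : ∀ ω, S ω = 0 ∨ S ω = 1) (hA01 : ∀ ω, A ω = 0 ∨ A ω = 1)
    (hPS0 : 0 < P {ω | S ω = 0}) (hPS0A0 : 0 < P {ω | S ω = 0 ∧ A ω = 0})
    (hPS1A1 : 0 < P {ω | S ω = 1 ∧ A ω = 1})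
    (hPS1A0 : 0 < P {ω | S ω = 1 ∧ A ω = 0})
    (μ11 μ10 μ00 π g q : E → ℝ)
    (hμ11 : IsVersion P X Y {ω | S ω = 1 ∧ A ω = 1} μ11)
    (hμ10 : IsVersion P X Y {ω | S ω = 1 ∧ A ω = 0} μ10)
    (hμ00 : IsVersion P X Y {ω | S ω = 0 ∧ A ω = 0} μ00)
    (hπ : IsVersion P X (fun ω => 1 - A ω) {ω | S ω = 0} π)
    (hg : IsVersion P X S Set.univ g)
    (hq : IsVersion P X A {ω | S ω = 1} q)
    (ε M : ℝ) (hε0 : 0 < ε) (hε1 : ε < 1) (hM : 1 ≤ M)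
    (hbd : ∀ᵐ ω ∂P,
      ε ≤ g (X ω) ∧ g (X ω) ≤ 1 - ε ∧ ε ≤ q (X ω) ∧ q (X ω) ≤ 1 - ε ∧
      ε ≤ |μ10 (X ω)| ∧ |μ11 (X ω)| ≤ M ∧ |μ10 (X ω)| ≤ M ∧ |μ00 (X ω)| ≤ M ∧
      |Y ω| ≤ M ∧ (1 - g (X ω)) / g (X ω) ≤ M)
    (hπbd : ∀ᵐ ω ∂P, S ω = 0 → ε ≤ π (X ω) ∧ π (X ω) ≤ 1 - ε) :
    ∀ m11 m10 m00 t p : E → ℝ, Admissible2 P X ε M m11 m10 m00 t p →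
      (∫ ω, H2 P X S A Y q m11 m10 m00 t p ω ∂P) -
          condMean P (fun ω => μ11 (X ω) / μ10 (X ω) * μ00 (X ω)) {ω | S ω = 0}
        = condMean P (fun ω =>
            (m11 (X ω) / m10 (X ω) - μ11 (X ω) / μ10 (X ω)) *
              (μ00 (X ω) -
                t (X ω) / ((1 - g (X ω)) / g (X ω)) *
                  (m00 (X ω) / m10 (X ω)) * μ10 (X ω)) +
            m11 (X ω) / m10 (X ω) * (1 - π (X ω) / p (X ω)) *
              (m00 (X ω) - μ00 (X ω))) {ω | S ω = 0} :=
  H2_second_order_expansion_general P X S A Y hX hS hA hY hS01 hA01 μ11 μ10 μ00 π g q hμ11 hμ10 hμ00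
    hπ hg hq ε M hε0 hbd hπbd
end

section
/- Characterization of L² ratio consistency (Section 2.4, equivalence of conditions (S.2) and (S.3)): n^{−a} · ‖fₙ/gₙ − f/g‖ → 0 as n → ∞ if and only if there exist measurable functions δₙ : E → ℝ with ε/C ≤ |δₙ| ≤ C/ε ν-a.e. for every n, such that n^{−a} · ( ‖fₙ − f·δₙ‖ + ‖gₙ − g·δₙ‖ ) → 0 as n → ∞. -/
/-! Pointwise, `u = fₙ/gₙ − f/g`, `A = fₙ − fδ` and `B = gₙ − gδ` satisfy
`u = (A g − f B)/(gₙ g)` and `A = gₙ u + (f/g) B`, so the bounds on `f, g, gₙ` give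
`|u| ≲ |A| + |B|` and `|A| ≲ |u| + |B|` with constants depending only on `C` and `ε`.
These pass to `L²` norms, `B` being bounded once `|δ| ≤ C/ε`. This gives (S.3) ⇒ (S.2),
and for (S.2) ⇒ (S.3) one takes `δₙ = gₙ/g`, for which `B` vanishes. -/

open MeasureTheory Filter

/-- The `L²(ν)` norm `‖h‖ = (∫ h² dν)^{1/2}`. -/
noncomputable def norm2 {E : Type*} [MeasurableSpace E] (ν : Measure E) (h : E → ℝ) : ℝ :=
  Real.sqrt (∫ x, (h x) ^ 2 ∂ν)

section
variable {fn gn f g d C ε : ℝ}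

theorem abs_div_sub_div_le (hε : 0 < ε) (hf : |f| ≤ C) (hg : ε ≤ |g|) (hg' : |g| ≤ C)
    (hgn : ε ≤ |gn|) :
    |fn / gn - f / g| ≤ C / ε ^ 2 * (|fn - f * d| + |gn - g * d|) := by
  have hg0 : g ≠ 0 := abs_pos.mp (hε.trans_le hg)
  have hgn0 : gn ≠ 0 := abs_pos.mp (hε.trans_le hgn)
  have hC : 0 ≤ C := (abs_nonneg f).trans hf
  have key : fn / gn - f / g = ((fn - f * d) * g - f * (gn - g * d)) / (gn * g) := by
    field_simp; ring
  rw [key, abs_div, abs_mul]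
  calc |(fn - f * d) * g - f * (gn - g * d)| / (|gn| * |g|)
      ≤ (|fn - f * d| * C + C * |gn - g * d|) / (ε * ε) := by
        gcongr
        calc _ ≤ |(fn - f * d) * g| + |f * (gn - g * d)| := abs_sub _ _
          _ ≤ _ := by rw [abs_mul, abs_mul]; gcongr
    _ = C / ε ^ 2 * (|fn - f * d| + |gn - g * d|) := by ring

theorem abs_sub_mul_le (hε : 0 < ε) (hf : |f| ≤ C) (hg : ε ≤ |g|) (hgn : ε ≤ |gn|)
    (hgn' : |gn| ≤ C) :
    |fn - f * d| ≤ (C + C / ε) * (|fn / gn - f / g| + |gn - g * d|) := by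
  have hg0 : g ≠ 0 := abs_pos.mp (hε.trans_le hg)
  have hgn0 : gn ≠ 0 := abs_pos.mp (hε.trans_le hgn)
  have hC : 0 ≤ C := (abs_nonneg f).trans hf
  have key : fn - f * d = gn * (fn / gn - f / g) + f / g * (gn - g * d) := by
    field_simp; ring
  rw [key]
  calc |gn * (fn / gn - f / g) + f / g * (gn - g * d)|
      ≤ C * |fn / gn - f / g| + C / ε * |gn - g * d| := by
        refine (abs_add_le _ _).trans ?_
        rw [abs_mul, abs_mul, abs_div]
        gcongr
    _ ≤ (C + C / ε) * (|fn / gn - f / g| + |gn - g * d|) := by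
        nlinarith [abs_nonneg (fn / gn - f / g), abs_nonneg (gn - g * d),
          div_nonneg hC hε.le]

theorem abs_sub_mul_le_of_abs_le (hg : |g| ≤ C) (hgn : |gn| ≤ C) (hd : |d| ≤ C / ε) :
    |gn - g * d| ≤ C + C * (C / ε) := by
  refine (abs_sub _ _).trans (add_le_add hgn ?_)
  rw [abs_mul]
  exact mul_le_mul hg hd (abs_nonneg _) ((abs_nonneg _).trans hg)

theorem abs_div_mem_Icc (hε : 0 < ε) (hg : ε ≤ |g|) (hg' : |g| ≤ C) (hgn : ε ≤ |gn|)
    (hgn' : |gn| ≤ C) : |gn / g| ∈ Set.Icc (ε / C) (C / ε) := by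
  rw [abs_div]
  exact ⟨div_le_div₀ (abs_nonneg _) hgn (hε.trans_le hg) hg',
    div_le_div₀ ((abs_nonneg _).trans hgn') hgn' hε hg⟩

end

theorem tendsto_mul_zero_of_le_mul {ι : Type*} {l : Filter ι} {w x y : ι → ℝ} {K : ℝ}
    (hw : ∀ i, 0 ≤ w i) (hx : ∀ i, 0 ≤ x i) (hxy : ∀ i, x i ≤ K * y i)
    (hy : Tendsto (fun i => w i * y i) l (nhds 0)) :
    Tendsto (fun i => w i * x i) l (nhds 0) :=
  squeeze_zero (fun i => mul_nonneg (hw i) (hx i))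
    (fun i => (mul_le_mul_of_nonneg_left (hxy i) (hw i)).trans_eq (mul_left_comm _ _ _))
    (by simpa using hy.const_mul K)

section
variable {α : Type*} [MeasurableSpace α] {μ : Measure α} {p : ENNReal} {u A B : α → ℝ}
  {K : ℝ}

theorem lpNorm_le_of_ae_norm_le {f g : α → ℝ} (hg : MemLp g p μ)
    (h : ∀ᵐ x ∂μ, ‖f x‖ ≤ g x) : lpNorm f p μ ≤ lpNorm g p μ := by
  by_cases hf : AEStronglyMeasurable f μ
  · rw [← toReal_eLpNorm hf, ← toReal_eLpNorm hg.aestronglyMeasurable]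
    exact ENNReal.toReal_mono hg.eLpNorm_ne_top (eLpNorm_mono_ae_real h)
  · simp [hf]

theorem memLp_of_ae_abs_le_mul_add (hu : AEStronglyMeasurable u μ) (hA : MemLp A p μ)
    (hB : MemLp B p μ) (h : ∀ᵐ x ∂μ, |u x| ≤ K * (|A x| + |B x|)) : MemLp u p μ :=
  ((hA.abs.add hB.abs).const_mul K).of_le hu <| h.mono fun x hx => by
    simpa [Real.norm_eq_abs] using hx.trans (le_abs_self _)

/-- As `lpNorm` is `0` off `Lᵖ`, the bound fails when `u ∈ Lᵖ` but `A ∉ Lᵖ`;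
`hAu` excludes this. -/
theorem lpNorm_le_mul_add_of_ae_abs_le (hp : 1 ≤ p) (hK : 0 ≤ K) (hB : MemLp B p μ)
    (hAu : MemLp u p μ → MemLp A p μ) (h : ∀ᵐ x ∂μ, |u x| ≤ K * (|A x| + |B x|)) :
    lpNorm u p μ ≤ K * (lpNorm A p μ + lpNorm B p μ) := by
  by_cases hA : MemLp A p μ
  · calc lpNorm u p μ ≤ lpNorm (K • fun x => |A x| + |B x|) p μ :=
          lpNorm_le_of_ae_norm_le ((hA.abs.add hB.abs).const_smul K) (by simpa using h)
      _ = K * lpNorm (fun x => |A x| + |B x|) p μ := by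
          rw [lpNorm_const_smul]; simp [abs_of_nonneg hK]
      _ ≤ K * (lpNorm A p μ + lpNorm B p μ) := by
          gcongr
          have h := lpNorm_add_le (g := fun x => |B x|) hA.abs hp
          rw [lpNorm_abs hA.1, lpNorm_fun_abs hB.1] at h
          exact h
  · rw [lpNorm_of_not_memLp (mt hAu hA)]
    exact mul_nonneg hK (add_nonneg lpNorm_nonneg lpNorm_nonneg)

end

section
variable {E : Type*} [MeasurableSpace E] {ν : Measure E}

theorem norm2_nonneg (ν : Measure E) (h : E → ℝ) : 0 ≤ norm2 ν h :=
  Real.sqrt_nonneg _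

theorem norm2_eq_zero_of_ae_eq_zero {h : E → ℝ} (hh : h =ᵐ[ν] 0) : norm2 ν h = 0 := by
  rw [norm2, integral_eq_zero_of_ae (hh.mono fun x hx => by simp [hx]), Real.sqrt_zero]

theorem norm2_eq_lpNorm {h : E → ℝ} (hh : AEStronglyMeasurable h ν) :
    norm2 ν h = lpNorm h 2 ν := by
  rw [lpNorm_eq_integral_norm_rpow_toReal two_ne_zero ENNReal.ofNat_ne_top hh, norm2,
    Real.sqrt_eq_rpow]
  simp [Real.norm_eq_abs, sq_abs]

theorem norm2_le_mul_add_of_ae_abs_le {u A B : E → ℝ} {K K' : ℝ}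
    (hu : AEStronglyMeasurable u ν) (hA : AEStronglyMeasurable A ν) (hB : MemLp B 2 ν)
    (hK : 0 ≤ K) (huA : ∀ᵐ x ∂ν, |u x| ≤ K * (|A x| + |B x|))
    (hAu : ∀ᵐ x ∂ν, |A x| ≤ K' * (|u x| + |B x|)) :
    norm2 ν u ≤ K * (norm2 ν A + norm2 ν B) := by
  rw [norm2_eq_lpNorm hu, norm2_eq_lpNorm hA, norm2_eq_lpNorm hB.1]
  exact lpNorm_le_mul_add_of_ae_abs_le one_le_two hK hB
    (fun hu' => memLp_of_ae_abs_le_mul_add hA hu' hB hAu) huA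

variable {f g fn gn δ : E → ℝ} {C ε : ℝ}

theorem memLp_sub_mul_of_ae_abs_le [IsFiniteMeasure ν] (hg : Measurable g)
    (hgn : Measurable gn) (hδ : Measurable δ)
    (hbd : ∀ᵐ x ∂ν, |g x| ≤ C ∧ |gn x| ≤ C ∧ |δ x| ≤ C / ε) :
    MemLp (fun x => gn x - g x * δ x) 2 ν :=
  .of_bound (hgn.sub (hg.mul hδ)).aestronglyMeasurable (C + C * (C / ε))
    (hbd.mono fun _ ⟨hgx, hgnx, hδx⟩ => abs_sub_mul_le_of_abs_le hgx hgnx hδx)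

theorem norm2_div_sub_div_le [IsFiniteMeasure ν] (hf : Measurable f) (hg : Measurable g)
    (hfn : Measurable fn) (hgn : Measurable gn) (hδ : Measurable δ) (hC : 0 ≤ C)
    (hε : 0 < ε)
    (hbd : ∀ᵐ x ∂ν,
      |f x| ≤ C ∧ ε ≤ |g x| ∧ |g x| ≤ C ∧ ε ≤ |gn x| ∧ |gn x| ≤ C)
    (hδC : ∀ᵐ x ∂ν, |δ x| ≤ C / ε) :
    norm2 ν (fun x => fn x / gn x - f x / g x) ≤
      C / ε ^ 2 * (norm2 ν (fun x => fn x - f x * δ x) +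
        norm2 ν (fun x => gn x - g x * δ x)) :=
  norm2_le_mul_add_of_ae_abs_le ((hfn.div hgn).sub (hf.div hg)).aestronglyMeasurable
    (hfn.sub (hf.mul hδ)).aestronglyMeasurable
    (memLp_sub_mul_of_ae_abs_le hg hgn hδ <| hbd.mp <|
      hδC.mono fun _ hδx ⟨_, _, hgx, _, hgnx⟩ => ⟨hgx, hgnx, hδx⟩)
    (by positivity)
    (hbd.mono fun _ ⟨hfx, hgx, hgx', hgnx, _⟩ => abs_div_sub_div_le hε hfx hgx hgx' hgnx)
    (hbd.mono fun _ ⟨hfx, hgx, _, hgnx, hgnx'⟩ => abs_sub_mul_le hε hfx hgx hgnx hgnx')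

theorem norm2_sub_mul_le [IsFiniteMeasure ν] (hf : Measurable f) (hg : Measurable g)
    (hfn : Measurable fn) (hgn : Measurable gn) (hδ : Measurable δ) (hC : 0 ≤ C)
    (hε : 0 < ε)
    (hbd : ∀ᵐ x ∂ν,
      |f x| ≤ C ∧ ε ≤ |g x| ∧ |g x| ≤ C ∧ ε ≤ |gn x| ∧ |gn x| ≤ C)
    (hδC : ∀ᵐ x ∂ν, |δ x| ≤ C / ε) :
    norm2 ν (fun x => fn x - f x * δ x) ≤
      (C + C / ε) * (norm2 ν (fun x => fn x / gn x - f x / g x) +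
        norm2 ν (fun x => gn x - g x * δ x)) :=
  norm2_le_mul_add_of_ae_abs_le (hfn.sub (hf.mul hδ)).aestronglyMeasurable
    ((hfn.div hgn).sub (hf.div hg)).aestronglyMeasurable
    (memLp_sub_mul_of_ae_abs_le hg hgn hδ <| hbd.mp <|
      hδC.mono fun _ hδx ⟨_, _, hgx, _, hgnx⟩ => ⟨hgx, hgnx, hδx⟩)
    (by positivity)
    (hbd.mono fun _ ⟨hfx, hgx, _, hgnx, hgnx'⟩ => abs_sub_mul_le hε hfx hgx hgnx hgnx')
    (hbd.mono fun _ ⟨hfx, hgx, hgx', hgnx, _⟩ => abs_div_sub_div_le hε hfx hgx hgx' hgnx)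

end

theorem ratio_L2_consistency_characterization_general
    {E : Type*} [MeasurableSpace E] (ν : Measure E) [IsFiniteMeasure ν]
    (a : ℝ)
    (f g : E → ℝ) (fN gN : ℕ → E → ℝ)
    (hf : Measurable f) (hg : Measurable g)
    (hfN : ∀ n, Measurable (fN n)) (hgN : ∀ n, Measurable (gN n))
    (C ε : ℝ) (hC : 1 ≤ C) (hε : 0 < ε)
    (hbd : ∀ᵐ x ∂ν, |f x| ≤ C ∧ ε ≤ |g x| ∧ |g x| ≤ C ∧
      ∀ n, ε ≤ |gN n x| ∧ |gN n x| ≤ C) :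
    Tendsto (fun n : ℕ => (n : ℝ) ^ (-a) *
        norm2 ν (fun x => fN n x / gN n x - f x / g x)) atTop (nhds 0) ↔
    ∃ δ : ℕ → E → ℝ, (∀ n, Measurable (δ n)) ∧
      (∀ᵐ x ∂ν, ∀ n, ε / C ≤ |δ n x| ∧ |δ n x| ≤ C / ε) ∧
      Tendsto (fun n : ℕ => (n : ℝ) ^ (-a) *
          (norm2 ν (fun x => fN n x - f x * δ n x) +
            norm2 ν (fun x => gN n x - g x * δ n x)))
        atTop (nhds 0) := by
  have hC0 : 0 ≤ C := zero_le_one.trans hC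
  have hw : ∀ n : ℕ, 0 ≤ (n : ℝ) ^ (-a) := fun n => Real.rpow_nonneg n.cast_nonneg _
  have hbdN : ∀ n, ∀ᵐ x ∂ν,
      |f x| ≤ C ∧ ε ≤ |g x| ∧ |g x| ≤ C ∧ ε ≤ |gN n x| ∧ |gN n x| ≤ C :=
    fun n => hbd.mono fun _ ⟨hfx, hgx, hgx', hgnx⟩ => ⟨hfx, hgx, hgx', hgnx n⟩
  constructor
  · intro hlim
    have hδ : ∀ᵐ x ∂ν, ∀ n, |gN n x / g x| ∈ Set.Icc (ε / C) (C / ε) :=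
      hbd.mono fun _ ⟨_, hgx, hgx', hgnx⟩ n =>
        abs_div_mem_Icc hε hgx hgx' (hgnx n).1 (hgnx n).2
    refine ⟨fun n x => gN n x / g x, fun n => (hgN n).div hg, hδ,
      tendsto_mul_zero_of_le_mul (K := C + C / ε) hw
        (fun n => add_nonneg (norm2_nonneg _ _) (norm2_nonneg _ _)) (fun n => ?_) hlim⟩
    have hB : norm2 ν (fun x => gN n x - g x * (gN n x / g x)) = 0 :=
      norm2_eq_zero_of_ae_eq_zero <| hbd.mono fun x ⟨_, hgx, _⟩ => by
        simp [mul_div_cancel₀ _ (abs_pos.mp (hε.trans_le hgx))]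
    simpa [hB] using norm2_sub_mul_le hf hg (hfN n) (hgN n) ((hgN n).div hg) hC0 hε (hbdN n)
      (hδ.mono fun x hx => (hx n).2)
  · rintro ⟨δ, hδ, hδC, hlim⟩
    exact tendsto_mul_zero_of_le_mul hw (fun n => norm2_nonneg _ _)
      (fun n => norm2_div_sub_div_le hf hg (hfN n) (hgN n) (hδ n) hC0 hε (hbdN n)
        (hδC.mono fun x hx => (hx n).2)) hlim

/-- Characterization of L² ratio consistency (Section 2.4, (S.2) ⇔ (S.3)):
`n^{−a}·‖fₙ/gₙ − f/g‖ → 0` iff there are measurable `δₙ` with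
`ε/C ≤ |δₙ| ≤ C/ε` ν-a.e. such that `n^{−a}·(‖fₙ − f·δₙ‖ + ‖gₙ − g·δₙ‖) → 0`. -/
theorem ratio_L2_consistency_characterization
    {E : Type*} [MeasurableSpace E] (ν : Measure E) [IsFiniteMeasure ν]
    (a : ℝ) (ha : a ≤ 0)
    (f g : E → ℝ) (fN gN : ℕ → E → ℝ)
    (hf : Measurable f) (hg : Measurable g)
    (hfN : ∀ n, Measurable (fN n)) (hgN : ∀ n, Measurable (gN n))
    (C ε : ℝ) (hC : 1 ≤ C) (hε : 0 < ε)
    (hbd : ∀ᵐ x ∂ν, |f x| ≤ C ∧ ε ≤ |g x| ∧ |g x| ≤ C ∧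
      ∀ n, ε ≤ |gN n x| ∧ |gN n x| ≤ C) :
    Tendsto (fun n : ℕ => (n : ℝ) ^ (-a) *
        norm2 ν (fun x => fN n x / gN n x - f x / g x)) atTop (nhds 0) ↔
    ∃ δ : ℕ → E → ℝ, (∀ n, Measurable (δ n)) ∧
      (∀ᵐ x ∂ν, ∀ n, ε / C ≤ |δ n x| ∧ |δ n x| ≤ C / ε) ∧
      Tendsto (fun n : ℕ => (n : ℝ) ^ (-a) *
          (norm2 ν (fun x => fN n x - f x * δ n x) +
            norm2 ν (fun x => gN n x - g x * δ n x)))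
        atTop (nhds 0) :=
  ratio_L2_consistency_characterization_general ν a f g fN gN hf hg hfN hgN C ε hC hε hbd
end
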